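/- arXiv:1802.01337 — 6 statements merged into one kernel-verified Lean document; each statement's English description precedes it below -/
import Mathlib

section
/- Let a, b, c, d be nonnegative real numbers with a ≥ b ≥ c ≥ d and a + d = b + c. Then for any unitaries U₁, U₂ ∈ U(2) there exist unitaries V₁, V₂ ∈ U(2) such that a·U₁XU₁† + d·U₂XU₂† = b·V₁XV₁† + c·V₂XV₂† for every X ∈ M₂(ℂ). -/
open Matrix

/-- Half-angle extraction: from a unit vector (u1,u2) produce (p1,p2) with
p1² = (1+u1)/2, p2² = (1−u1)/2, 2p1p2 = u2. -/
lemma extract_half (u1 u2 : ℝ) (h : u1^2 + u2^2 = 1) :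
    ∃ p1 p2 : ℝ, p1^2 = (1+u1)/2 ∧ p2^2 = (1-u1)/2 ∧ 2*p1*p2 = u2 := by
  by_cases h1 : u1 = -1
  · refine ⟨0, 1, by simp [h1], by norm_num [h1], ?_⟩
    have : u2^2 = 0 := by nlinarith
    nlinarith
  · have hge : -1 ≤ u1 := by nlinarith
    have hpos : 0 < (1+u1)/2 := by
      rcases lt_or_eq_of_le hge with h' | h'
      · linarith
      · exact absurd h'.symm h1
    set p1 := Real.sqrt ((1+u1)/2) with hp1
    have hp1pos : 0 < p1 := Real.sqrt_pos.mpr hpos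
    have hp1sq : p1^2 = (1+u1)/2 := Real.sq_sqrt hpos.le
    refine ⟨p1, u2/(2*p1), hp1sq, ?_, ?_⟩
    · field_simp
      nlinarith [hp1sq]
    · field_simp

lemma two_circles (b c w1 w2 : ℝ) (hc : 0 < c) (hcb : c ≤ b)
    (hlb : (b-c)^2 ≤ w1^2 + w2^2) (hub : w1^2 + w2^2 ≤ (b+c)^2) :
    ∃ u1 u2 v1 v2 : ℝ, u1^2+u2^2 = 1 ∧ v1^2+v2^2 = 1 ∧
      b*u1 + c*v1 = w1 ∧ b*u2 + c*v2 = w2 := by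
  have hb : 0 < b := lt_of_lt_of_le hc hcb
  obtain ⟨r, hr0, hr2⟩ : ∃ r : ℝ, 0 ≤ r ∧ r^2 = w1^2 + w2^2 :=
    ⟨Real.sqrt (w1^2 + w2^2), Real.sqrt_nonneg _, Real.sq_sqrt (by positivity)⟩
  by_cases hr : r = 0
  · have hw1 : w1 = 0 := by nlinarith
    have hw2 : w2 = 0 := by nlinarith
    have hbc : b = c := by nlinarith
    exact ⟨1, 0, -1, 0, by norm_num, by norm_num, by rw [hw1]; ring_nf; linarith,
      by rw [hw2]; ring⟩
  · have hrpos : 0 < r := lt_of_le_of_ne hr0 (Ne.symm hr)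
    have hrub : r ≤ b + c := by nlinarith
    have hrlb : b - c ≤ r := by nlinarith
    obtain ⟨p, q, hpq, hpr⟩ : ∃ p q : ℝ, p^2 + q^2 = 1 ∧ 2*r*b*p = r^2 + b^2 - c^2 := by
      have hp2 : ((r^2 + b^2 - c^2)/(2*r*b))^2 ≤ 1 := by
        rw [div_pow, div_le_one (by positivity)]
        nlinarith [sq_nonneg (r + b - c), sq_nonneg (r - b + c)]
      refine ⟨(r^2 + b^2 - c^2)/(2*r*b), Real.sqrt (1 - ((r^2 + b^2 - c^2)/(2*r*b))^2), ?_, by field_simp⟩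
      rw [Real.sq_sqrt (by linarith)]; ring
    refine ⟨(p*w1 - q*w2)/r, (p*w2 + q*w1)/r,
      (w1 - b*((p*w1 - q*w2)/r))/c, (w2 - b*((p*w2 + q*w1)/r))/c, ?_, ?_, ?_, ?_⟩
    · rw [div_pow, div_pow, ← add_div, div_eq_one_iff_eq (by positivity)]
      linear_combination (w1^2 + w2^2) * hpq - hr2
    · have hnum : (w1 - b*((p*w1 - q*w2)/r))^2 + (w2 - b*((p*w2 + q*w1)/r))^2 = c^2 := by
        have h1 : (w1 - b*((p*w1 - q*w2)/r)) = (w1*r - b*(p*w1 - q*w2))/r := by field_simp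
        have h2 : (w2 - b*((p*w2 + q*w1)/r)) = (w2*r - b*(p*w2 + q*w1))/r := by field_simp
        rw [h1, h2, div_pow, div_pow, ← add_div, div_eq_iff (by positivity)]
        linear_combination b^2*(w1^2+w2^2)*hpq - (w1^2+w2^2)*hpr - c^2*hr2
      rw [div_pow, div_pow, ← add_div, div_eq_one_iff_eq (by positivity)]
      linear_combination hnum
    · field_simp; ring
    · field_simp; ring

lemma coeff_exists (a b c d k : ℝ) (hd : 0 ≤ d) (hdc : d ≤ c) (hcb : c ≤ b) (hba : b ≤ a)
    (hsum : a + d = b + c) (hk : k^2 ≤ 1) :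
    ∃ α₁ β₁ α₂ β₂ : ℝ,
      b*α₁^2 + c*α₂^2 = a ∧ b*β₁^2 + c*β₂^2 = d ∧ b*(α₁*β₁) + c*(α₂*β₂) = 0 ∧
      α₁^2 + β₁^2 + 2*k*(α₁*β₁) = 1 ∧ α₂^2 + β₂^2 + 2*k*(α₂*β₂) = 1 := by
  rcases eq_or_lt_of_le (le_trans hd hdc) with hc0 | hc
  · have hc0 : c = 0 := hc0.symm
    have hd0 : d = 0 := le_antisymm (hc0 ▸ hdc) hd
    have hab : a = b := by linarith
    exact ⟨1, 0, 1, 0, by rw [hc0, hab]; ring, by rw [hc0, hd0]; ring, by ring,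
      by ring, by ring⟩
  · have hb : 0 < b := lt_of_lt_of_le hc hcb
    have ha : 0 < a := lt_of_lt_of_le hb hba
    rcases eq_or_lt_of_le hk with hk1 | hklt
    · -- k² = 1 : degenerate case
      have hk1 : k^2 = 1 := hk1
      obtain ⟨R, hR0, hR2⟩ : ∃ R : ℝ, 0 ≤ R ∧ R^2 = a*b*c*d :=
        ⟨Real.sqrt (a*b*c*d), Real.sqrt_nonneg _, Real.sq_sqrt
          (mul_nonneg (mul_nonneg (mul_nonneg ha.le hb.le) hc.le) hd)⟩
      obtain ⟨β₁, hx⟩ : ∃ x : ℝ, b*(b+c)*x = k*b*d + R :=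
        ⟨(k*b*d + R)/(b*(b+c)), by field_simp⟩
      have hquad : b*(b+c)*β₁^2 - 2*k*b*d*β₁ + (d^2 - c*d) = 0 := by
        have hbc : (0:ℝ) < b*(b+c) := by positivity
        have hbig : (b*(b+c)) * (b*(b+c)*β₁^2 - 2*k*b*d*β₁ + (d^2 - c*d)) = (b*(b+c)) * 0 := by
          linear_combination (b*(b+c)*β₁ + (k*b*d + R) - 2*k*b*d)*hx + hR2 - b^2*d^2*hk1 + b*c*d*hsum
        exact mul_left_cancel₀ hbc.ne' hbig
      obtain ⟨β₂, hβ₂⟩ : ∃ y : ℝ, c*y = k*d - b*β₁ := ⟨(k*d - b*β₁)/c, by field_simp⟩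
      have hlin : b*β₁ + c*β₂ = k*d := by linarith [hβ₂]
      have hquad2 : b*β₁^2 + c*β₂^2 = d := by
        have h : c*(b*β₁^2 + c*β₂^2) = c*d := by
          linear_combination hquad + d^2*hk1 + (c*β₂ + k*d - b*β₁)*hβ₂
        exact mul_left_cancel₀ hc.ne' h
      refine ⟨1 - k*β₁, β₁, 1 - k*β₂, β₂, ?_, hquad2, ?_, ?_, ?_⟩
      · linear_combination (-2*k)*hlin + k^2*hquad2 + (-d)*hk1 - hsum
      · linear_combination hlin - k*hquad2
      · linear_combination (-β₁^2)*hk1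
      · linear_combination (-β₂^2)*hk1
    · -- k² < 1
      obtain ⟨s, hs0, hs2⟩ : ∃ s : ℝ, 0 < s ∧ s^2 = 1 - k^2 :=
        ⟨Real.sqrt (1 - k^2), Real.sqrt_pos.mpr (by linarith), Real.sq_sqrt (by linarith)⟩
      have had : b - c ≤ a - d := by linarith
      have hbc0 : 0 ≤ b - c := by linarith
      have hadk : 0 ≤ a*d*k^2 := mul_nonneg (mul_nonneg ha.le hd) (sq_nonneg k)
      have hww : (a - d + 2*d*k^2)^2 + (2*d*k*s)^2 = (a-d)^2 + 4*a*d*k^2 := by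
        linear_combination (4*d^2*k^2)*hs2
      obtain ⟨u1, u2, v1, v2, hu, hv, hL1, hL2⟩ :=
        two_circles b c (a - d + 2*d*k^2) (2*d*k*s) hc hcb
          (by rw [hww]; nlinarith) (by rw [hww]; nlinarith [mul_nonneg (mul_nonneg ha.le hd) (sub_nonneg.mpr hklt.le)])
      obtain ⟨p1, p2, hp1, hp2, hp3⟩ := extract_half u1 u2 hu
      obtain ⟨q1, q2, hq1, hq2, hq3⟩ := extract_half v1 v2 hv
      have hsne : s ≠ 0 := hs0.ne'
      have hA : b*p1^2 + c*q1^2 = (b + c + (a - d + 2*d*k^2))/2 := by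
        linear_combination b*hp1 + c*hq1 + (1/2)*hL1
      have hB : b*p2^2 + c*q2^2 = (b + c - (a - d + 2*d*k^2))/2 := by
        linear_combination b*hp2 + c*hq2 - (1/2)*hL1
      have hC : b*(p1*p2) + c*(q1*q2) = d*k*s := by
        linear_combination (b/2)*hp3 + (c/2)*hq3 + (1/2)*hL2
      refine ⟨p1 - (k/s)*p2, p2/s, q1 - (k/s)*q2, q2/s, ?_, ?_, ?_, ?_, ?_⟩
      · field_simp
        linear_combination s^2*hA + k^2*hB - 2*k*s*hC - ((s^2 + k^2)/2)*hsum - d*k^2*hs2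
      · field_simp
        linear_combination hB - (1/2)*hsum - d*hs2
      · field_simp
        linear_combination s*hC - k*hB + (k/2)*hsum + d*k*hs2
      · field_simp
        linear_combination s^2*hp1 + s^2*hp2 - p2^2*hs2
      · field_simp
        linear_combination s^2*hq1 + s^2*hq2 - q2^2*hs2

lemma conj_expand (A B X : Matrix (Fin 2) (Fin 2) ℂ) (x y u v : ℂ) :
    (x•A + y•B) * X * (u•Aᴴ + v•Bᴴ) =
      (x*u)•(A*X*Aᴴ) + (y*v)•(B*X*Bᴴ) + (x*v)•(A*X*Bᴴ) + (y*u)•(B*X*Aᴴ) := by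
  simp only [add_mul, mul_add, smul_mul_assoc, mul_smul_comm, smul_smul]
  module

/-- Lemma 1 of the paper: Let `a ≥ b ≥ c ≥ d ≥ 0` be real numbers with
`a + d = b + c`. For any unitaries `U₁, U₂ ∈ U(2)` there exist unitaries `V₁, V₂ ∈ U(2)`
such that `a·U₁XU₁† + d·U₂XU₂† = b·V₁XV₁† + c·V₂XV₂†` for every `X ∈ M₂(ℂ)`. -/
theorem unital_qubit_coefficient_swap
    (a b c d : ℝ) (hd : 0 ≤ d) (hdc : d ≤ c) (hcb : c ≤ b) (hba : b ≤ a)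
    (hsum : a + d = b + c)
    (U₁ U₂ : Matrix (Fin 2) (Fin 2) ℂ)
    (hU₁ : U₁ ∈ Matrix.unitaryGroup (Fin 2) ℂ)
    (hU₂ : U₂ ∈ Matrix.unitaryGroup (Fin 2) ℂ) :
    ∃ V₁ V₂ : Matrix (Fin 2) (Fin 2) ℂ,
      V₁ ∈ Matrix.unitaryGroup (Fin 2) ℂ ∧ V₂ ∈ Matrix.unitaryGroup (Fin 2) ℂ ∧
      ∀ X : Matrix (Fin 2) (Fin 2) ℂ,
        (a : ℂ) • (U₁ * X * U₁ᴴ) + (d : ℂ) • (U₂ * X * U₂ᴴ) =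
        (b : ℂ) • (V₁ * X * V₁ᴴ) + (c : ℂ) • (V₂ * X * V₂ᴴ) := by
  have hU1 : U₁ * U₁ᴴ = 1 := by
    have := Matrix.mem_unitaryGroup_iff.mp hU₁; rwa [Matrix.star_eq_conjTranspose] at this
  have hU1' : U₁ᴴ * U₁ = 1 := by
    have := Matrix.mem_unitaryGroup_iff'.mp hU₁; rwa [Matrix.star_eq_conjTranspose] at this
  have hU2 : U₂ * U₂ᴴ = 1 := by
    have := Matrix.mem_unitaryGroup_iff.mp hU₂; rwa [Matrix.star_eq_conjTranspose] at this
  have hU2' : U₂ᴴ * U₂ = 1 := by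
    have := Matrix.mem_unitaryGroup_iff'.mp hU₂; rwa [Matrix.star_eq_conjTranspose] at this
  set M : Matrix (Fin 2) (Fin 2) ℂ := U₁ * U₂ᴴ with hMdef
  have hM : M * Mᴴ = 1 := by
    rw [hMdef, Matrix.conjTranspose_mul, Matrix.conjTranspose_conjTranspose]
    calc U₁ * U₂ᴴ * (U₂ * U₁ᴴ) = U₁ * (U₂ᴴ * U₂) * U₁ᴴ := by noncomm_ring
    _ = 1 := by rw [hU2', mul_one, hU1]
  have hMmem : M ∈ Matrix.unitaryGroup (Fin 2) ℂ := by
    rw [Matrix.mem_unitaryGroup_iff, Matrix.star_eq_conjTranspose]; exact hM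
  have hdetM : (starRingEnd ℂ) M.det * M.det = 1 := by
    have := (Matrix.det_of_mem_unitary hMmem).1
    rwa [Complex.star_def] at this
  have hdet0 : M.det ≠ 0 := by
    intro h; rw [h] at hdetM; simp at hdetM
  obtain ⟨e, he⟩ : ∃ e : ℂ, e^2 = M.det := by
    refine ⟨Complex.exp (Complex.log M.det / 2), ?_⟩
    rw [sq, ← Complex.exp_add, add_halves, Complex.exp_log hdet0]
  have hee : (starRingEnd ℂ) e * e = 1 := by
    have h2 : ((starRingEnd ℂ) e * e)^2 = 1 := by
      rw [mul_pow, ← map_pow, he]; exact hdetM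
    have hre : (starRingEnd ℂ) e * e = ((Complex.normSq e : ℝ) : ℂ) := by
      rw [mul_comm, Complex.mul_conj]
    rw [hre] at h2 ⊢
    have : (Complex.normSq e)^2 = 1 := by exact_mod_cast h2
    have h0 : 0 ≤ Complex.normSq e := Complex.normSq_nonneg e
    have : Complex.normSq e = 1 := by nlinarith
    rw [this]; norm_num
  have he0 : e ≠ 0 := by
    intro h; rw [h] at hee; simp at hee
  have hce : (starRingEnd ℂ) e = e⁻¹ := eq_inv_of_mul_eq_one_left hee
  have hadj : Mᴴ = (e^2)⁻¹ • (M.trace • (1 : Matrix (Fin 2) (Fin 2) ℂ) - M) := by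
    have h1 : M⁻¹ = Mᴴ := Matrix.inv_eq_right_inv hM
    have h2 : Matrix.adjugate M = M.trace • (1 : Matrix (Fin 2) (Fin 2) ℂ) - M := by
      rw [Matrix.adjugate_fin_two]
      ext i j
      fin_cases i <;> fin_cases j <;>
        simp [Matrix.trace_fin_two, Matrix.one_apply] <;> ring
    rw [← h1, Matrix.inv_def, h2, he]
    simp [smul_sub, smul_smul]
  set t : ℂ := M.trace * e⁻¹ with htdef
  have htr : Mᴴ.trace = M.trace * (e^2)⁻¹ := by
    rw [hadj]
    simp [Matrix.trace_smul, Matrix.trace_sub, Matrix.trace_one, Matrix.trace_smul]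
    ring
  have ht : (starRingEnd ℂ) t = t := by
    have h5 : (starRingEnd ℂ) M.trace = M.trace * (e^2)⁻¹ := by
      rw [← Complex.star_def, ← Matrix.trace_conjTranspose, htr]
    rw [htdef, _root_.map_mul, h5, map_inv₀, hce, inv_inv]
    field_simp
  have htre : t = ((t.re : ℝ) : ℂ) := (Complex.conj_eq_iff_re.mp ht).symm
  -- bound on |t|
  have habs : ‖t‖ ≤ 2 := by
    have hrow : ∀ i : Fin 2, Complex.normSq (M i 0) + Complex.normSq (M i 1) = 1 := by
      intro i
      have h1 : (M * Mᴴ) i i = 1 := by rw [hM]; simp [Matrix.one_apply]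
      rw [Matrix.mul_apply, Fin.sum_univ_two] at h1
      have h2 : Mᴴ 0 i = (starRingEnd ℂ) (M i 0) := rfl
      have h3 : Mᴴ 1 i = (starRingEnd ℂ) (M i 1) := rfl
      rw [h2, h3, Complex.mul_conj, Complex.mul_conj] at h1
      exact_mod_cast h1
    have habse : ‖e‖ = 1 := by
      have := congrArg norm (congrArg (· * e) hce)
      have h1 : Complex.normSq e = 1 := by
        have := hee
        rw [mul_comm, Complex.mul_conj] at this
        exact_mod_cast this
      have : (‖e‖)^2 = 1 := by rw [Complex.sq_norm]; exact h1
      nlinarith [norm_nonneg e]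
    have h00 : ‖M 0 0‖ ≤ 1 := by
      nlinarith [hrow 0, Complex.normSq_nonneg (M 0 1), norm_nonneg (M 0 0),
        Complex.sq_norm (M 0 0)]
    have h11 : ‖M 1 1‖ ≤ 1 := by
      nlinarith [hrow 1, Complex.normSq_nonneg (M 1 0), norm_nonneg (M 1 1),
        Complex.sq_norm (M 1 1)]
    have htrabs : ‖M.trace‖ ≤ 2 := by
      rw [Matrix.trace_fin_two]
      calc ‖M 0 0 + M 1 1‖ ≤ ‖M 0 0‖ + ‖M 1 1‖ :=
        norm_add_le _ _
      _ ≤ 2 := by linarith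
    calc ‖t‖ = ‖M.trace‖ * ‖e‖⁻¹ := by
          rw [htdef, norm_mul, norm_inv]
    _ = ‖M.trace‖ := by rw [habse]; simp
    _ ≤ 2 := htrabs
  set kr : ℝ := t.re / 2 with hkr
  have hk2 : kr^2 ≤ 1 := by
    have h1 : |t.re| ≤ ‖t‖ := Complex.abs_re_le_norm t
    have h2 : |t.re| ≤ 2 := le_trans h1 habs
    rw [hkr]
    rw [abs_le] at h2
    nlinarith [h2.1, h2.2]
  -- the key cross identity
  have hcross : (starRingEnd ℂ e) • M + e • Mᴴ = ((2*kr : ℝ) : ℂ) • (1 : Matrix (Fin 2) (Fin 2) ℂ) := by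
    have h1 : ((2*kr : ℝ) : ℂ) = t := by
      rw [htre]; push_cast; rw [hkr]; push_cast; ring
    rw [h1, hadj, hce, smul_smul]
    have h2 : e * (e^2)⁻¹ = e⁻¹ := by field_simp
    rw [h2, htdef]
    rw [smul_sub, smul_smul, mul_comm]
    abel
  obtain ⟨α₁, β₁, α₂, β₂, E1, E2, E3, E4, E5⟩ :=
    coeff_exists a b c d kr hd hdc hcb hba hsum hk2
  have hMH : U₂ * U₁ᴴ = Mᴴ := by
    rw [hMdef, Matrix.conjTranspose_mul, Matrix.conjTranspose_conjTranspose]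
  have hVH : ∀ (x y : ℝ), (((x:ℂ))•U₁ + (((y:ℂ))*e)•U₂)ᴴ =
      ((x:ℂ))•U₁ᴴ + (((y:ℂ))*(starRingEnd ℂ) e)•U₂ᴴ := by
    intro x y
    simp [Matrix.conjTranspose_smul, Complex.star_def, _root_.map_mul, Complex.conj_ofReal]
  have unit_key : ∀ x y : ℝ, x^2 + y^2 + 2*kr*(x*y) = 1 →
      (((x:ℂ))•U₁ + (((y:ℂ))*e)•U₂) ∈ Matrix.unitaryGroup (Fin 2) ℂ := by
    intro x y hxy
    rw [Matrix.mem_unitaryGroup_iff, Matrix.star_eq_conjTranspose, hVH]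
    have step1 : (((x:ℂ))•U₁ + (((y:ℂ))*e)•U₂) * (((x:ℂ))•U₁ᴴ + (((y:ℂ))*(starRingEnd ℂ) e)•U₂ᴴ)
        = ((x:ℂ)*(x:ℂ))•(U₁*1*U₁ᴴ) + (((y:ℂ)*e)*((y:ℂ)*(starRingEnd ℂ) e))•(U₂*1*U₂ᴴ)
          + ((x:ℂ)*((y:ℂ)*(starRingEnd ℂ) e))•(U₁*1*U₂ᴴ) + (((y:ℂ)*e)*(x:ℂ))•(U₂*1*U₁ᴴ) := by
      rw [← conj_expand, mul_one]
    rw [step1]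
    simp only [mul_one]
    rw [hU1, hU2, hMH]
    have step2 : ((x:ℂ)*(x:ℂ))•(1 : Matrix (Fin 2) (Fin 2) ℂ)
          + (((y:ℂ)*e)*((y:ℂ)*(starRingEnd ℂ) e))•(1 : Matrix (Fin 2) (Fin 2) ℂ)
          + ((x:ℂ)*((y:ℂ)*(starRingEnd ℂ) e))•M + (((y:ℂ)*e)*(x:ℂ))•Mᴴ
        = ((x:ℂ)*(x:ℂ) + ((y:ℂ)*e)*((y:ℂ)*(starRingEnd ℂ) e))•(1 : Matrix (Fin 2) (Fin 2) ℂ)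
          + ((x:ℂ)*(y:ℂ))•((starRingEnd ℂ e) • M + e • Mᴴ) := by
      simp only [smul_add, smul_smul, add_smul]
      module
    rw [step2, hcross, smul_smul]
    rw [← add_smul]
    have hco : ((x:ℂ)*(x:ℂ) + ((y:ℂ)*e)*((y:ℂ)*(starRingEnd ℂ) e)) + ((x:ℂ)*(y:ℂ))*(((2*kr : ℝ)):ℂ) = 1 := by
      have hxy' : ((x:ℝ):ℂ)^2 + ((y:ℝ):ℂ)^2 + 2*((kr:ℝ):ℂ)*(((x:ℝ):ℂ)*((y:ℝ):ℂ)) = 1 := by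
        exact_mod_cast congrArg Complex.ofReal hxy
      push_cast
      linear_combination hxy' + ((y:ℂ)^2)*hee
    rw [hco, one_smul]
  obtain E1c : (b:ℂ)*(α₁:ℂ)^2 + (c:ℂ)*(α₂:ℂ)^2 = (a:ℂ) := by exact_mod_cast congrArg Complex.ofReal E1
  obtain E2c : (b:ℂ)*(β₁:ℂ)^2 + (c:ℂ)*(β₂:ℂ)^2 = (d:ℂ) := by exact_mod_cast congrArg Complex.ofReal E2
  obtain E3c : (b:ℂ)*((α₁:ℂ)*(β₁:ℂ)) + (c:ℂ)*((α₂:ℂ)*(β₂:ℂ)) = 0 := by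
    exact_mod_cast congrArg Complex.ofReal E3
  refine ⟨(α₁:ℂ) • U₁ + ((β₁:ℂ)*e) • U₂, (α₂:ℂ) • U₁ + ((β₂:ℂ)*e) • U₂,
    unit_key α₁ β₁ E4, unit_key α₂ β₂ E5, ?_⟩
  intro X
  rw [hVH, hVH, conj_expand, conj_expand]
  match_scalars
  · linear_combination -E1c
  · linear_combination -(e*(starRingEnd ℂ) e)*E2c - (d:ℂ)*hee
  · linear_combination -((starRingEnd ℂ) e)*E3c
  · linear_combination -e*E3c
end

section
/- Let a, b, c, d be nonnegative real numbers with a ≥ b ≥ c ≥ d and a + d = b + c, and let D ∈ U(2) be a diagonal unitary matrix. Then there exist diagonal unitaries W₁, W₂ ∈ U(2) such that a·X + d·DXD† = b·W₁XW₁† + c·W₂XW₂† for every X ∈ M₂(ℂ). -/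
open Matrix

lemma exists_unit_sum (b c : ℝ) (hc : 0 ≤ c) (hcb : c ≤ b) (z : ℂ)
    (h1 : b - c ≤ ‖z‖) (h2 : ‖z‖ ≤ b + c) :
    ∃ u v : ℂ, ‖u‖ = 1 ∧ ‖v‖ = 1 ∧ (b:ℂ) * u + (c:ℂ) * v = z := by
  obtain ⟨r, hr⟩ : ∃ r, r = ‖z‖ := ⟨_, rfl⟩
  rw [← hr] at h1 h2
  have hr0 : 0 ≤ r := hr ▸ norm_nonneg z
  rcases eq_or_lt_of_le hc with hc0 | hcpos
  · -- c = 0, so r = b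
    have hrb : r = b := le_antisymm (by linarith) (by linarith)
    rcases eq_or_lt_of_le (hc0.le.trans hcb) with hb0 | hbpos
    · refine ⟨1, 1, by simp, by simp, ?_⟩
      have hz : z = 0 := by
        have : ‖z‖ = 0 := by rw [← hr, hrb, ← hb0]
        exact norm_eq_zero.mp this
      rw [hz, ← hb0, ← hc0]; simp
    · refine ⟨z / b, 1, ?_, by simp, ?_⟩
      · rw [norm_div, Complex.norm_real, Real.norm_eq_abs, abs_of_pos hbpos, ← hr, hrb, div_self (ne_of_gt hbpos)]
      · have hbC : (b:ℂ) ≠ 0 := by exact_mod_cast hbpos.ne'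
        rw [← hc0]
        field_simp; simp
  · rcases eq_or_lt_of_le hr0 with hr0' | hrpos
    · have hbc : b = c := le_antisymm (by linarith) hcb
      refine ⟨1, -1, by simp, by simp, ?_⟩
      have hz : z = 0 := norm_eq_zero.mp (hr ▸ hr0').symm
      rw [hz, hbc]; ring
    · -- main case: r > 0, c > 0
      have hb : 0 < b := lt_of_lt_of_le hcpos hcb
      have hrC : (r:ℂ) ≠ 0 := by exact_mod_cast hrpos.ne'
      have hcC : (c:ℂ) ≠ 0 := by exact_mod_cast hcpos.ne'
      obtain ⟨x, hx⟩ : ∃ x:ℝ, x = (r^2 + b^2 - c^2) / (2*b*r) := ⟨_, rfl⟩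
      have hbr1 : c^2 ≤ (b+r)^2 := sq_le_sq' (by linarith) (by linarith)
      have hbr2 : (b-r)^2 ≤ c^2 := sq_le_sq' (by linarith) (by linarith)
      have hx2 : x^2 ≤ 1 := by
        rw [hx, div_pow, div_le_one (by positivity)]
        nlinarith [mul_nonneg (by linarith : (0:ℝ) ≤ (b+r)^2 - c^2) (by linarith : (0:ℝ) ≤ c^2 - (b-r)^2)]
      obtain ⟨y, hy⟩ : ∃ y:ℝ, y = Real.sqrt (1 - x^2) := ⟨_, rfl⟩
      have hy2 : y^2 = 1 - x^2 := by rw [hy]; exact Real.sq_sqrt (by linarith)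
      obtain ⟨w, hw⟩ : ∃ w:ℂ, w = ⟨x, y⟩ := ⟨_, rfl⟩
      have hwabs : ‖w‖ = 1 := by
        rw [hw, Complex.norm_def, Complex.normSq_mk]
        rw [show x*x + y*y = x^2 + y^2 by ring, hy2]
        simp
      obtain ⟨u, hu⟩ : ∃ u:ℂ, u = (z / r) * w := ⟨_, rfl⟩
      have huabs : ‖u‖ = 1 := by
        rw [hu, norm_mul, norm_div, Complex.norm_real, Real.norm_eq_abs, abs_of_pos hrpos, ← hr,
          div_self (ne_of_gt hrpos), one_mul, hwabs]
      have h2brx : 2*b*r*x = r^2+b^2-c^2 := by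
        rw [hx]; field_simp
      have key : ‖z - b * u‖ = c := by
        have hfac : z - b * u = (z / r) * (r - b * w) := by
          rw [hu]; field_simp
        rw [hfac, norm_mul, norm_div, Complex.norm_real, Real.norm_eq_abs, abs_of_pos hrpos, ← hr,
          div_self (ne_of_gt hrpos), one_mul]
        have habs2 : (‖(r:ℂ) - b * w‖)^2 = c^2 := by
          rw [Complex.sq_norm, Complex.normSq_apply]
          simp only [Complex.sub_re, Complex.sub_im, Complex.mul_re, Complex.mul_im,
            Complex.ofReal_re, Complex.ofReal_im, hw]
          ring_nf
          nlinarith [hy2, h2brx]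
        have : ‖(r:ℂ) - b * w‖ = Real.sqrt (c^2) := by
          rw [← habs2, Real.sqrt_sq (norm_nonneg _)]
        rw [this, Real.sqrt_sq hcpos.le]
      refine ⟨u, (z - b * u) / c, huabs, ?_, ?_⟩
      · rw [norm_div, key, Complex.norm_real, Real.norm_eq_abs, abs_of_pos hcpos, div_self (ne_of_gt hcpos)]
      · field_simp; ring

lemma abs_one_of_mul_conj {p : ℂ} (h : p * (starRingEnd ℂ) p = 1) : ‖p‖ = 1 := by
  have h2 : ‖p‖ * ‖p‖ = 1 := by
    have := congrArg (‖·‖) h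
    rwa [norm_mul, Complex.norm_conj, norm_one] at this
  rcases mul_self_eq_one_iff.mp h2 with h3 | h3
  · exact h3
  · nlinarith [norm_nonneg p]

lemma mul_conj_of_abs_one {u : ℂ} (h : ‖u‖ = 1) : u * (starRingEnd ℂ) u = 1 := by
  rw [Complex.mul_conj]
  norm_cast
  rw [Complex.normSq_eq_norm_sq, h]; norm_num

/-- Let `a ≥ b ≥ c ≥ d ≥ 0` be real numbers with `a + d = b + c`, and let
`D ∈ U(2)` be a diagonal unitary. There exist diagonal unitaries `W₁, W₂ ∈ U(2)` such that
`a·X + d·DXD† = b·W₁XW₁† + c·W₂XW₂†` for every `X ∈ M₂(ℂ)`. -/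
theorem diagonal_unitary_coefficient_swap
    (a b c d : ℝ) (hd : 0 ≤ d) (hdc : d ≤ c) (hcb : c ≤ b) (hba : b ≤ a)
    (hsum : a + d = b + c)
    (D : Matrix (Fin 2) (Fin 2) ℂ)
    (hD : D ∈ Matrix.unitaryGroup (Fin 2) ℂ) (hDdiag : D.IsDiag) :
    ∃ W₁ W₂ : Matrix (Fin 2) (Fin 2) ℂ,
      W₁ ∈ Matrix.unitaryGroup (Fin 2) ℂ ∧ W₁.IsDiag ∧
      W₂ ∈ Matrix.unitaryGroup (Fin 2) ℂ ∧ W₂.IsDiag ∧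
      ∀ X : Matrix (Fin 2) (Fin 2) ℂ,
        (a : ℂ) • X + (d : ℂ) • (D * X * Dᴴ) =
        (b : ℂ) • (W₁ * X * W₁ᴴ) + (c : ℂ) • (W₂ * X * W₂ᴴ) := by
  have hD01 : D 0 1 = 0 := hDdiag (by decide)
  have hD10 : D 1 0 = 0 := hDdiag (by decide)
  have hDs : D * star D = 1 := (Matrix.mem_unitaryGroup_iff).mp hD
  have hpp : D 0 0 * (starRingEnd ℂ) (D 0 0) = 1 := by
    have := congrFun (congrFun hDs 0) 0
    simpa [Matrix.mul_apply, Fin.sum_univ_two, Matrix.star_apply, hD01] using this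
  have hqq : D 1 1 * (starRingEnd ℂ) (D 1 1) = 1 := by
    have := congrFun (congrFun hDs 1) 1
    simpa [Matrix.mul_apply, Fin.sum_univ_two, Matrix.star_apply, hD10] using this
  set ω : ℂ := D 0 0 * (starRingEnd ℂ) (D 1 1) with hω
  have hωabs : ‖ω‖ = 1 := by
    rw [hω, norm_mul, Complex.norm_conj, abs_one_of_mul_conj hpp, abs_one_of_mul_conj hqq,
      mul_one]
  set z : ℂ := (a:ℂ) + (d:ℂ) * ω with hz
  have hub : ‖z‖ ≤ b + c := by
    calc ‖z‖ ≤ ‖(a:ℂ)‖ + ‖(d:ℂ) * ω‖ := norm_add_le _ _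
    _ = a + d := by rw [norm_mul, hωabs, Complex.norm_real, Real.norm_eq_abs, Complex.norm_real, Real.norm_eq_abs,
        abs_of_nonneg (by linarith : (0:ℝ) ≤ a), abs_of_nonneg hd, mul_one]
    _ = b + c := hsum
  have hlb : b - c ≤ ‖z‖ := by
    have h1 : ‖(a:ℂ)‖ ≤ ‖z‖ + ‖(d:ℂ) * ω‖ := by
      calc ‖(a:ℂ)‖ = ‖z - (d:ℂ)*ω‖ := by rw [hz]; ring_nf
      _ ≤ _ := norm_sub_le _ _
    rw [Complex.norm_real, Real.norm_eq_abs, abs_of_nonneg (by linarith : (0:ℝ) ≤ a), norm_mul, hωabs,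
      Complex.norm_real, Real.norm_eq_abs, abs_of_nonneg hd, mul_one] at h1
    linarith
  obtain ⟨u, v, hu1, hv1, huv⟩ := exists_unit_sum b c (le_trans hd hdc) hcb z hlb hub
  have huu := mul_conj_of_abs_one hu1
  have hvv := mul_conj_of_abs_one hv1
  have hsumC : (a:ℂ) + d = b + c := by exact_mod_cast hsum
  have hzeq : (b:ℂ) * u + (c:ℂ) * v = (a:ℂ) + (d:ℂ) * (D 0 0 * (starRingEnd ℂ) (D 1 1)) := huv
  have hzconj : (b:ℂ) * (starRingEnd ℂ) u + (c:ℂ) * (starRingEnd ℂ) v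
      = (a:ℂ) + (d:ℂ) * ((starRingEnd ℂ) (D 0 0) * D 1 1) := by
    have := congrArg (starRingEnd ℂ) hzeq
    simpa [_root_.map_add, _root_.map_mul, Complex.conj_conj, Complex.conj_ofReal] using this
  refine ⟨!![1, 0; 0, (starRingEnd ℂ) u], !![1, 0; 0, (starRingEnd ℂ) v], ?_, ?_, ?_, ?_, ?_⟩
  · rw [Matrix.mem_unitaryGroup_iff]
    ext i j
    fin_cases i <;> fin_cases j <;>
      simp [Matrix.mul_apply, Fin.sum_univ_two, Matrix.star_apply, Matrix.one_apply] <;>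
      simpa [mul_comm] using huu
  · intro i j hij
    fin_cases i <;> fin_cases j <;> simp_all
  · rw [Matrix.mem_unitaryGroup_iff]
    ext i j
    fin_cases i <;> fin_cases j <;>
      simp [Matrix.mul_apply, Fin.sum_univ_two, Matrix.star_apply, Matrix.one_apply] <;>
      simpa [mul_comm] using hvv
  · intro i j hij
    fin_cases i <;> fin_cases j <;> simp_all
  · intro X
    ext i j
    fin_cases i <;> fin_cases j <;>
      simp only [Matrix.add_apply, Matrix.smul_apply, Matrix.mul_apply, Fin.sum_univ_two,
        Matrix.conjTranspose_apply, hD01, hD10, smul_eq_mul, Matrix.cons_val', Matrix.cons_val_zero,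
        Matrix.cons_val_one, Matrix.head_cons, Matrix.head_fin_const, Matrix.empty_val',
        Matrix.cons_val_fin_one, Matrix.of_apply, Fin.mk_zero, Fin.mk_one, Complex.star_def, star_zero, star_one, _root_.map_zero, _root_.map_one, Complex.conj_conj]
    · linear_combination X 0 0 * ((d:ℂ) * hpp + hsumC)
    · linear_combination - X 0 1 * hzeq
    · linear_combination - X 1 0 * hzconj
    · linear_combination X 1 1 * ((d:ℂ) * hqq + hsumC - (b:ℂ) * huu - (c:ℂ) * hvv)
end

section
/- Let a, b, c, d be nonnegative real numbers with a ≥ b ≥ c ≥ d and a + d = b + c, and let θ ∈ [0, 2π). Then there exists α ∈ [0, θ] such that |a + d·exp(iθ) − b·exp(iα)| = c. -/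
open Matrix

/-- for `a ≥ b ≥ c ≥ d ≥ 0` with `a + d = b + c` and `θ ∈ [0, 2π)` there is
`α ∈ [0, θ]` with `|a + d·e^{iθ} − b·e^{iα}| = c`. -/
theorem exists_angle_modulus_eq
    (a b c d θ : ℝ) (hd : 0 ≤ d) (hdc : d ≤ c) (hcb : c ≤ b) (hba : b ≤ a)
    (hsum : a + d = b + c) (hθ0 : 0 ≤ θ) (hθ2π : θ < 2 * Real.pi) :
    ∃ α ∈ Set.Icc (0 : ℝ) θ,
      ‖(a : ℂ) + (d : ℂ) * Complex.exp (θ * Complex.I)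
        - (b : ℂ) * Complex.exp (α * Complex.I)‖ = c := by
  set f : ℝ → ℝ := fun α =>
    ‖(a : ℂ) + (d : ℂ) * Complex.exp (θ * Complex.I)
      - (b : ℂ) * Complex.exp (α * Complex.I)‖ with hf
  have hcont : ContinuousOn f (Set.Icc 0 θ) := by
    apply Continuous.continuousOn
    exact continuous_norm.comp (by continuity)
  have h0 : f 0 ≤ c := by
    have he : ((a : ℂ) + (d : ℂ) * Complex.exp (θ * Complex.I)
        - (b : ℂ) * Complex.exp ((0:ℝ) * Complex.I))
        = ((a - b : ℝ) : ℂ) + (d : ℂ) * Complex.exp (θ * Complex.I) := by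
      push_cast
      simp [Complex.exp_zero]
      ring
    have hab : (0:ℝ) ≤ a - b := by linarith
    calc f 0 = ‖((a - b : ℝ) : ℂ) + (d : ℂ) * Complex.exp (θ * Complex.I)‖ := by
          rw [hf]; simp only; rw [he]
      _ ≤ ‖((a - b : ℝ) : ℂ)‖
            + ‖(d : ℂ) * Complex.exp (θ * Complex.I)‖ := by
          apply norm_add_le
      _ = (a - b) + d := by
          rw [norm_mul, Complex.norm_exp_ofReal_mul_I,
            Complex.norm_real, Complex.norm_real, Real.norm_eq_abs, Real.norm_eq_abs, abs_of_nonneg hab, abs_of_nonneg hd]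
          ring
      _ = c := by linarith
  have hθc : c ≤ f θ := by
    have he : ((a : ℂ) + (d : ℂ) * Complex.exp (θ * Complex.I)
        - (b : ℂ) * Complex.exp ((θ:ℝ) * Complex.I))
        = (a : ℂ) - ((b - d : ℝ) : ℂ) * Complex.exp (θ * Complex.I) := by
      push_cast; ring
    have hbd : (0:ℝ) ≤ b - d := by linarith
    have h1 : ‖(a : ℂ)‖ - ‖((b - d : ℝ) : ℂ) * Complex.exp (θ * Complex.I)‖
        ≤ ‖(a : ℂ) - ((b - d : ℝ) : ℂ) * Complex.exp (θ * Complex.I)‖ :=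
      norm_sub_norm_le _ _
    have ha : (0:ℝ) ≤ a := by linarith
    rw [hf]
    simp only
    rw [he]
    have h2 : ‖(a : ℂ)‖ = a := by
      rw [Complex.norm_real, Real.norm_eq_abs, abs_of_nonneg ha]
    have h3 : ‖((b - d : ℝ) : ℂ) * Complex.exp (θ * Complex.I)‖ = b - d := by
      rw [norm_mul, Complex.norm_exp_ofReal_mul_I, Complex.norm_real, Real.norm_eq_abs, abs_of_nonneg hbd]
      ring
    rw [h2, h3] at h1
    linarith
  have := intermediate_value_Icc hθ0 hcont
  have hmem : c ∈ Set.Icc (f 0) (f θ) := ⟨h0, hθc⟩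
  obtain ⟨α, hα, hfα⟩ := this hmem
  exact ⟨α, hα, hfα⟩
end

section
/- Let p and q be probability distributions of the same length k, both arranged in decreasing order, with p ≻ q and p ≠ q. Define n = max{i : q_i < p_i}, m = min{i > n : q_i > p_i}, and δ = min(p_n − q_n, q_m − p_m). Then m is well defined with m > n, the chain of inequalities p_n > p_n − δ ≥ q_n ≥ q_m ≥ p_m + δ > p_m holds, and the distribution p' obtained from p by replacing p_n with p_n − δ and p_m with p_m + δ is still arranged in decreasing order, still majorizes q, and coincides with q in strictly more indices than p does. -/
open BigOperators

/-- the T-transform step in the proof of Theorem 2. Let `p, q` be decreasingly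
ordered probability distributions of length `k` with `p ≻ q` (expressed via partial sums, since
both are sorted) and `p ≠ q`. Then `n = max{i : qᵢ < pᵢ}` and `m = min{i > n : qᵢ > pᵢ}` are
well defined with `n < m`; with `δ = min(pₙ − qₙ, q_m − p_m)` the chain
`pₙ > pₙ − δ ≥ qₙ ≥ q_m ≥ p_m + δ > p_m` holds; and the distribution `p'` obtained from `p` by
replacing `pₙ` with `pₙ − δ` and `p_m` with `p_m + δ` is still decreasingly ordered, still
majorizes `q`, and coincides with `q` in strictly more indices than `p` does. -/
theorem t_transform_step
    (k : ℕ) (p q : Fin k → ℝ)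
    (hpA : Antitone p) (hqA : Antitone q)
    (hp0 : ∀ i, 0 ≤ p i) (hp1 : ∑ i, p i = 1)
    (hq0 : ∀ i, 0 ≤ q i) (hq1 : ∑ i, q i = 1)
    (hmaj : ∀ j : ℕ,
      ∑ i ∈ Finset.univ.filter (fun i : Fin k => (i : ℕ) < j), q i ≤
        ∑ i ∈ Finset.univ.filter (fun i : Fin k => (i : ℕ) < j), p i)
    (hne : p ≠ q) :
    ∃ n m : Fin k,
      -- `n` is the largest index with `qₙ < pₙ`
      (q n < p n ∧ ∀ i, q i < p i → i ≤ n) ∧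
      -- `m` is the smallest index `> n` with `p_m < q_m`
      (n < m ∧ p m < q m ∧ ∀ i, n < i → p i < q i → m ≤ i) ∧
      (let δ : ℝ := min (p n - q n) (q m - p m)
       let p' : Fin k → ℝ := Function.update (Function.update p n (p n - δ)) m (p m + δ)
       -- the chain of inequalities
       (p m < p m + δ ∧ p m + δ ≤ q m ∧ q m ≤ q n ∧ q n ≤ p n - δ ∧ p n - δ < p n) ∧
       -- `p'` is still decreasingly ordered
       Antitone p' ∧
       -- `p'` still majorizes `q`
       (∀ j : ℕ,
         ∑ i ∈ Finset.univ.filter (fun i : Fin k => (i : ℕ) < j), q i ≤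
           ∑ i ∈ Finset.univ.filter (fun i : Fin k => (i : ℕ) < j), p' i) ∧
       -- `p'` coincides with `q` in strictly more indices than `p` does
       (Finset.univ.filter (fun i : Fin k => p i = q i)).card <
         (Finset.univ.filter (fun i : Fin k => p' i = q i)).card) := by
  classical
  -- existence of an index with q i < p i
  have hex : ∃ i, q i < p i := by
    by_contra h
    push_neg at h
    have heq : ∀ i ∈ Finset.univ, p i = q i :=
      (Finset.sum_eq_sum_iff_of_le (fun i _ => h i)).1 (hp1.trans hq1.symm)
    exact hne (funext fun i => heq i (Finset.mem_univ i))
  set S : Finset (Fin k) := Finset.univ.filter (fun i => q i < p i) with hSdef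
  have hSne : S.Nonempty := by
    obtain ⟨i, hi⟩ := hex
    exact ⟨i, by simp [hSdef, hi]⟩
  set n : Fin k := S.max' hSne with hndef
  have hn : q n < p n := by
    have := S.max'_mem hSne
    simpa [hSdef] using this
  have hn_max : ∀ i, q i < p i → i ≤ n := fun i hi => S.le_max' i (by simp [hSdef, hi])
  -- partial sums of f := p - q are nonneg
  have key : ∀ j : ℕ, 0 ≤ ∑ i ∈ Finset.univ.filter (fun i : Fin k => (i : ℕ) < j), (p i - q i) := by
    intro j
    rw [Finset.sum_sub_distrib]
    linarith [hmaj j]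
  have htot : ∑ i, (p i - q i) = 0 := by
    rw [Finset.sum_sub_distrib, hp1, hq1]; ring
  have herase : (Finset.univ.filter (fun i : Fin k => (i : ℕ) < (n : ℕ) + 1)).erase n
      = Finset.univ.filter (fun i : Fin k => (i : ℕ) < (n : ℕ)) := by
    ext i
    simp [Finset.mem_erase, Fin.ext_iff]
    omega
  have hAn1 : ∑ i ∈ Finset.univ.filter (fun i : Fin k => (i : ℕ) < (n : ℕ) + 1), (p i - q i)
      ≥ p n - q n := by
    have hmem : n ∈ Finset.univ.filter (fun i : Fin k => (i : ℕ) < (n : ℕ) + 1) := by simp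
    rw [← Finset.sum_erase_add _ _ hmem, herase]
    linarith [key (n : ℕ)]
  -- existence of m
  have hTex : ∃ i, n < i ∧ p i < q i := by
    by_contra h
    push_neg at h
    have hsplit := Finset.sum_filter_add_sum_filter_not Finset.univ
      (fun i : Fin k => (i : ℕ) < (n : ℕ) + 1) (fun i => p i - q i)
    have hrest : 0 ≤ ∑ i ∈ Finset.univ.filter (fun i : Fin k => ¬ (i : ℕ) < (n : ℕ) + 1),
        (p i - q i) := by
      apply Finset.sum_nonneg
      intro i hi
      simp only [Finset.mem_filter] at hi
      have : n < i := by rw [Fin.lt_def]; omega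
      linarith [h i this]
    rw [htot] at hsplit
    linarith
  set T : Finset (Fin k) := Finset.univ.filter (fun i => n < i ∧ p i < q i) with hTdef
  have hTne : T.Nonempty := by
    obtain ⟨i, h1, h2⟩ := hTex
    exact ⟨i, by simp [hTdef, h1, h2]⟩
  set m : Fin k := T.min' hTne with hmdef
  have hmT : n < m ∧ p m < q m := by
    have h := T.min'_mem hTne
    simp only [hTdef, Finset.mem_filter] at h
    exact h.2
  obtain ⟨hnm, hm⟩ := hmT
  have hm_min : ∀ i, n < i → p i < q i → m ≤ i := fun i h1 h2 => T.min'_le i (by simp [hTdef, h1, h2])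
  -- middle indices agree
  have pmid : ∀ i, n < i → i < m → p i = q i := by
    intro i h1 h2
    have hle : p i ≤ q i := by
      by_contra hc
      push_neg at hc
      exact absurd (hn_max i hc) (not_le.2 h1)
    have hge : q i ≤ p i := by
      by_contra hc
      push_neg at hc
      exact absurd (hm_min i h1 hc) (not_le.2 h2)
    linarith
  -- basic inequalities
  set δ : ℝ := min (p n - q n) (q m - p m) with hδdef
  have hδ1 : δ ≤ p n - q n := min_le_left _ _
  have hδ2 : δ ≤ q m - p m := min_le_right _ _
  have hδpos : 0 < δ := lt_min (by linarith) (by linarith)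
  set p' : Fin k → ℝ := Function.update (Function.update p n (p n - δ)) m (p m + δ) with hp'def
  have hnm' : n ≠ m := ne_of_lt hnm
  have hp'n : p' n = p n - δ := by
    rw [hp'def, Function.update_of_ne hnm', Function.update_self]
  have hp'm : p' m = p m + δ := by rw [hp'def, Function.update_self]
  have hp'o : ∀ i, i ≠ n → i ≠ m → p' i = p i := by
    intro i h1 h2
    rw [hp'def, Function.update_of_ne h2, Function.update_of_ne h1]
  have hqnm : q m ≤ q n := hqA hnm.le
  have c1 : p m < p m + δ := by linarith
  have c2 : p m + δ ≤ q m := by linarith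
  have c4 : q n ≤ p n - δ := by linarith
  have c5 : p n - δ < p n := by linarith
  -- p' is antitone
  have hanti : Antitone p' := by
    intro a b hab
    rcases eq_or_ne a n with rfl | han
    · rcases eq_or_ne b n with rfl | hbn
      · exact le_refl _
      · rcases eq_or_ne b m with rfl | hbm
        · rw [hp'm, hp'n]; linarith
        · rw [hp'o b hbn hbm, hp'n]
          have hgt : n < b := lt_of_le_of_ne hab (fun h => hbn h.symm)
          rcases lt_or_ge b m with hbm' | hmb
          · rw [pmid b hgt hbm']
            have := hqA hgt.le
            linarith
          · have := hpA hmb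
            linarith
    · rcases eq_or_ne a m with rfl | ham
      · rcases eq_or_ne b m with rfl | hbm
        · exact le_refl _
        · have hbn : b ≠ n := by
            intro h
            rw [h] at hab
            exact absurd hab (not_le.2 hnm)
          rw [hp'o b hbn hbm, hp'm]
          have := hpA hab
          linarith
      · rcases eq_or_ne b n with rfl | hbn
        · rw [hp'n, hp'o a han ham]
          have := hpA hab
          linarith
        · rcases eq_or_ne b m with rfl | hbm
          · rw [hp'm, hp'o a han ham]
            have ham' : a < m := lt_of_le_of_ne hab ham
            rcases lt_or_ge a n with han' | hna
            · have := hpA han'.le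
              linarith
            · have hna' : n < a := lt_of_le_of_ne hna (fun h => han h.symm)
              rw [pmid a hna' ham']
              have := hqA ham'.le
              linarith
          · rw [hp'o a han ham, hp'o b hbn hbm]
            exact hpA hab
  -- sum formula for p'
  have hpt : ∀ i, p' i = p i + (if i = m then δ else 0) - (if i = n then δ else 0) := by
    intro i
    rcases eq_or_ne i m with rfl | him
    · rw [hp'm]; simp [hnm'.symm]
    · rcases eq_or_ne i n with rfl | hin
      · rw [hp'n]; simp [him]
      · rw [hp'o i hin him]; simp [him, hin]
  have hp'sum : ∀ j : ℕ,
      ∑ i ∈ Finset.univ.filter (fun i : Fin k => (i : ℕ) < j), p' i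
        = ∑ i ∈ Finset.univ.filter (fun i : Fin k => (i : ℕ) < j), p i
          + (if m ∈ Finset.univ.filter (fun i : Fin k => (i : ℕ) < j) then δ else 0)
          - (if n ∈ Finset.univ.filter (fun i : Fin k => (i : ℕ) < j) then δ else 0) := by
    intro j
    simp only [hpt, Finset.sum_sub_distrib, Finset.sum_add_distrib, Finset.sum_ite_eq']
  -- p' still majorizes q
  have hmaj' : ∀ j : ℕ,
      ∑ i ∈ Finset.univ.filter (fun i : Fin k => (i : ℕ) < j), q i ≤
        ∑ i ∈ Finset.univ.filter (fun i : Fin k => (i : ℕ) < j), p' i := by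
    intro j
    rw [hp'sum j]
    by_cases hmj : (m : ℕ) < j
    · have hnj : (n : ℕ) < j := lt_trans (Fin.lt_def.1 hnm) hmj
      rw [if_pos (by simp [hmj]), if_pos (by simp [hnj])]
      linarith [hmaj j]
    · by_cases hnj : (n : ℕ) < j
      · rw [if_neg (by simp [hmj]), if_pos (by simp [hnj])]
        have hsub : Finset.univ.filter (fun i : Fin k => (i : ℕ) < (n : ℕ) + 1)
            ⊆ Finset.univ.filter (fun i : Fin k => (i : ℕ) < j) := by
          intro i hi
          simp only [Finset.mem_filter, Finset.mem_univ, true_and] at hi ⊢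
          omega
        have hsd := Finset.sum_sdiff (f := fun i => p i - q i) hsub
        have hzero : ∑ i ∈ (Finset.univ.filter (fun i : Fin k => (i : ℕ) < j)
            \ Finset.univ.filter (fun i : Fin k => (i : ℕ) < (n : ℕ) + 1)), (p i - q i) = 0 := by
          apply Finset.sum_eq_zero
          intro i hi
          simp only [Finset.mem_sdiff, Finset.mem_filter, Finset.mem_univ, true_and] at hi
          have h1 : n < i := Fin.lt_def.2 (by omega)
          have h2 : i < m := Fin.lt_def.2 (by omega)
          rw [pmid i h1 h2]; ring
        have hfj : δ ≤ ∑ i ∈ Finset.univ.filter (fun i : Fin k => (i : ℕ) < j), (p i - q i) := by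
          rw [← hsd, hzero]
          linarith [hAn1]
        rw [Finset.sum_sub_distrib] at hfj
        linarith
      · rw [if_neg (by simp [hmj]), if_neg (by simp [hnj])]
        linarith [hmaj j]
  -- p' agrees with q on strictly more indices
  have hcard : (Finset.univ.filter (fun i : Fin k => p i = q i)).card <
      (Finset.univ.filter (fun i : Fin k => p' i = q i)).card := by
    apply Finset.card_lt_card
    have hsubset : Finset.univ.filter (fun i : Fin k => p i = q i)
        ⊆ Finset.univ.filter (fun i : Fin k => p' i = q i) := by
      intro i hi
      simp only [Finset.mem_filter, Finset.mem_univ, true_and] at hi ⊢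
      have hin : i ≠ n := by intro h; rw [h] at hi; linarith
      have him : i ≠ m := by intro h; rw [h] at hi; linarith
      rw [hp'o i hin him]; exact hi
    rw [Finset.ssubset_iff_of_subset hsubset]
    rcases le_total (p n - q n) (q m - p m) with hc | hc
    · refine ⟨n, ?_, ?_⟩
      · simp only [Finset.mem_filter, Finset.mem_univ, true_and]
        rw [hp'n, hδdef, min_eq_left hc]; ring
      · simp only [Finset.mem_filter, Finset.mem_univ, true_and]
        intro h; linarith
    · refine ⟨m, ?_, ?_⟩
      · simp only [Finset.mem_filter, Finset.mem_univ, true_and]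
        rw [hp'm, hδdef, min_eq_right hc]; ring
      · simp only [Finset.mem_filter, Finset.mem_univ, true_and]
        intro h; linarith
  exact ⟨n, m, ⟨hn, hn_max⟩, ⟨hnm, hm, hm_min⟩, ⟨c1, c2, hqnm, c4, c5⟩, hanti, hmaj', hcard⟩
end

section
/- Let T : M₂(ℂ) → M₂(ℂ) be given by T(X) = Σ_{i=1}^k p_i·U_iXU_i† for a probability distribution (p₁, …, p_k) with nonnegative entries summing to 1 and unitaries U₁, …, U_k ∈ U(2). Then there exist unitaries V₁, …, V_k ∈ U(2) such that T(X) = (1/k)·Σ_{i=1}^k V_iXV_i† for all X ∈ M₂(ℂ). -/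
open Matrix BigOperators

open Complex


lemma abs_mk_eq_one {x y : ℝ} (h : x^2 + y^2 = 1) :
    ‖((x:ℂ) + (y:ℂ) * I)‖ = 1 := by
  have h2 : ‖((x:ℂ) + (y:ℂ) * I)‖ ^ 2 = 1 := by
    rw [Complex.sq_norm, Complex.normSq_apply]
    simp
    nlinarith
  nlinarith [norm_nonneg ((x:ℂ) + (y:ℂ) * I)]

lemma annulus (r s : ℝ) (w : ℂ) (hr : 0 ≤ r) (hs : 0 ≤ s)
    (h1 : |r - s| ≤ ‖w‖) (h2 : ‖w‖ ≤ r + s) :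
    ∃ u₁ u₂ : ℂ, ‖u₁‖ = 1 ∧ ‖u₂‖ = 1 ∧ (r:ℂ) * u₁ + (s:ℂ) * u₂ = w := by
  have habs : (r - s) ^ 2 ≤ ‖w‖ ^ 2 := by
    nlinarith [abs_nonneg (r - s), norm_nonneg w, _root_.sq_abs (r - s)]
  rcases eq_or_lt_of_le hr with hr0 | hr0
  · have hws : ‖w‖ = s := by
      rw [← hr0] at habs h2
      nlinarith [norm_nonneg w]
    rcases eq_or_lt_of_le hs with hs0 | hs0
    · refine ⟨1, 1, by simp, by simp, ?_⟩
      have : ‖w‖ = 0 := by rw [hws, ← hs0]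
      simp [norm_eq_zero.mp this, ← hr0, ← hs0]
    · refine ⟨1, w / s, by simp, ?_, ?_⟩
      · rw [norm_div, hws, Complex.norm_of_nonneg hs]
        exact div_self (ne_of_gt hs0)
      · rw [← hr0]
        push_cast
        rw [zero_mul, zero_add, mul_comm]
        exact div_mul_cancel₀ w (by exact_mod_cast hs0.ne')
  rcases eq_or_lt_of_le hs with hs0 | hs0
  · have hwr : ‖w‖ = r := by
      rw [← hs0] at habs h2
      nlinarith [norm_nonneg w]
    refine ⟨w / r, 1, ?_, by simp, ?_⟩
    · rw [norm_div, hwr, Complex.norm_of_nonneg hr]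
      exact div_self (ne_of_gt hr0)
    · rw [← hs0]
      push_cast
      rw [zero_mul, add_zero, mul_comm]
      exact div_mul_cancel₀ w (by exact_mod_cast hr0.ne')
  -- main case r,s > 0
  set c : ℝ := (‖w‖ ^ 2 - r ^ 2 - s ^ 2) / (2 * r * s) with hc
  have hc1 : -1 ≤ c := by
    rw [hc, le_div_iff₀ (by positivity)]
    nlinarith
  have hc2 : c ≤ 1 := by
    rw [hc, div_le_iff₀ (by positivity)]
    nlinarith [norm_nonneg w]
  have hcos : Real.cos (Real.arccos c) = c := Real.cos_arccos hc1 hc2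
  obtain ⟨x, y, hpyth, hcc⟩ : ∃ x y : ℝ, x^2 + y^2 = 1 ∧ c = 2*x^2 - 1 := by
    refine ⟨Real.cos (Real.arccos c / 2), Real.sin (Real.arccos c / 2), ?_, ?_⟩
    · rw [add_comm]; exact Real.sin_sq_add_cos_sq _
    · have := Real.cos_sq (Real.arccos c / 2)
      rw [show 2 * (Real.arccos c / 2) = Real.arccos c by ring, hcos] at this
      linarith
  set u₁ : ℂ := (x:ℂ) + (y:ℂ) * I with hu₁
  set u₂ : ℂ := (x:ℂ) - (y:ℂ) * I with hu₂
  have hau₁ : ‖u₁‖ = 1 := abs_mk_eq_one hpyth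
  have hau₂ : ‖u₂‖ = 1 := by
    rw [hu₂, sub_eq_add_neg, ← neg_mul, ← Complex.ofReal_neg]
    exact abs_mk_eq_one (by nlinarith)
  set z : ℂ := (r:ℂ) * u₁ + (s:ℂ) * u₂ with hz
  have hnz : ‖z‖ = ‖w‖ := by
    have h1' : ‖z‖ ^ 2 = ‖w‖ ^ 2 := by
      rw [Complex.sq_norm, Complex.normSq_apply]
      have hre : z.re = (r + s) * x := by simp [hz, hu₁, hu₂]; ring
      have him : z.im = (r - s) * y := by simp [hz, hu₁, hu₂]; ring
      rw [hre, him]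
      have h2rs : (2:ℝ) * r * s ≠ 0 := by positivity
      rw [hc] at hcc
      field_simp at hcc
      nlinarith [hcc, hpyth]
    nlinarith [norm_nonneg z, norm_nonneg w]
  by_cases hz0 : z = 0
  · have hw0 : w = 0 := by
      have : ‖w‖ = 0 := by rw [← hnz, hz0, norm_zero]
      exact norm_eq_zero.mp this
    exact ⟨u₁, u₂, hau₁, hau₂, by rw [← hz, hz0, hw0]⟩
  · have hwne : ‖w‖ ≠ 0 := by rw [← hnz]; simpa using hz0
    refine ⟨u₁ * (w / z), u₂ * (w / z), ?_, ?_, ?_⟩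
    · rw [norm_mul, hau₁, norm_div, hnz, one_mul, div_self hwne]
    · rw [norm_mul, hau₂, norm_div, hnz, one_mul, div_self hwne]
    · calc (r:ℂ) * (u₁ * (w / z)) + (s:ℂ) * (u₂ * (w / z))
          = ((r:ℂ) * u₁ + (s:ℂ) * u₂) * (w / z) := by ring
        _ = z * (w / z) := by rw [← hz]
        _ = w := by rw [mul_comm]; exact div_mul_cancel₀ w hz0

lemma unit_sqrt (u : ℂ) (hu : ‖u‖ = 1) :
    ∃ z : ℂ, ‖z‖ = 1 ∧ z ^ 2 = u := by
  obtain ⟨z, hz⟩ := IsAlgClosed.exists_pow_nat_eq u (n := 2) (by norm_num)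
  refine ⟨z, ?_, hz⟩
  have : ‖z‖ ^ 2 = 1 := by rw [← norm_pow, hz, hu]
  nlinarith [norm_nonneg z]

lemma star_mul_self_unit {δ : ℂ} (h : ‖δ‖ = 1) : star δ * δ = 1 := by
  have := Complex.mul_conj δ
  rw [Complex.normSq_eq_norm_sq, h] at this
  rw [show star δ = (starRingEnd ℂ) δ from rfl, mul_comm]
  simpa using this

lemma su2_reduce (U : Matrix (Fin 2) (Fin 2) ℂ) (hU : U ∈ Matrix.unitaryGroup (Fin 2) ℂ) :
    ∃ U₀ : Matrix (Fin 2) (Fin 2) ℂ, U₀ ∈ Matrix.unitaryGroup (Fin 2) ℂ ∧ U₀.det = 1 ∧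
      ∀ X, U * X * Uᴴ = U₀ * X * U₀ᴴ := by
  have hdet : ‖U.det‖ = 1 := by
    have h := Matrix.det_of_mem_unitary hU
    have h1 : star U.det * U.det = 1 := h.1
    have : ‖(star U.det * U.det)‖ = 1 := by rw [h1, norm_one]
    rw [norm_mul] at this
    rw [show star U.det = (starRingEnd ℂ) U.det from rfl, Complex.norm_conj] at this
    nlinarith [norm_nonneg U.det]
  obtain ⟨δ, hδ1, hδ2⟩ := unit_sqrt U.det hdet
  have hδ0 : δ ≠ 0 := by
    intro h; rw [h] at hδ1; simp at hδ1
  have hkey : star δ⁻¹ * δ⁻¹ = 1 := by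
    rw [star_inv₀, ← mul_inv, star_mul_self_unit hδ1, inv_one]
  have hkey' : δ⁻¹ * star δ⁻¹ = 1 := by rw [mul_comm]; exact hkey
  refine ⟨δ⁻¹ • U, ?_, ?_, ?_⟩
  · rw [Matrix.mem_unitaryGroup_iff, Matrix.star_eq_conjTranspose] at hU ⊢
    rw [Matrix.conjTranspose_smul]
    simp only [Matrix.smul_mul, Matrix.mul_smul, hU, smul_smul]
    rw [mul_comm, hkey', one_smul]
  · simp only [Matrix.det_smul, Fintype.card_fin]
    rw [← hδ2, inv_pow, inv_mul_cancel₀ (pow_ne_zero 2 hδ0)]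
  · intro X
    rw [Matrix.conjTranspose_smul]
    simp only [Matrix.smul_mul, Matrix.mul_smul, smul_smul]
    rw [hkey, one_smul]

lemma deg_real (a b c d n01 n10 : ℝ) (h0 : a^2+b^2+n01 = 1) (h1 : c^2+d^2+n10 = 1)
    (hn01 : 0 ≤ n01) (hn10 : 0 ≤ n10) (he : (a+c)^2 = 4) :
    b = 0 ∧ d = 0 ∧ n01 = 0 ∧ n10 = 0 ∧ a = c := by
  have hac : a = c := by nlinarith [sq_nonneg (a - c), sq_nonneg b, sq_nonneg d]
  have ha1 : a^2 = 1 := by nlinarith [sq_nonneg b, sq_nonneg d]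
  refine ⟨?_, ?_, ?_, ?_, hac⟩ <;> nlinarith [sq_nonneg b, sq_nonneg d]

lemma bound_real (a b c d n01 n10 : ℝ) (h0 : a^2+b^2+n01 = 1) (h1 : c^2+d^2+n10 = 1)
    (hn01 : 0 ≤ n01) (hn10 : 0 ≤ n10) : (a+c)^2 ≤ 4 := by
  nlinarith [sq_nonneg (a - c), sq_nonneg b, sq_nonneg d]

set_option maxHeartbeats 1000000 in
lemma two_term (U V : Matrix (Fin 2) (Fin 2) ℂ)
    (hU : U ∈ Matrix.unitaryGroup (Fin 2) ℂ) (hV : V ∈ Matrix.unitaryGroup (Fin 2) ℂ)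
    (p q r s : ℝ) (hp : 0 ≤ p) (hq : 0 ≤ q) (hr : 0 ≤ r) (hs : 0 ≤ s)
    (hsum : p + q = r + s) (hmaj : |r - s| ≤ |p - q|) :
    ∃ W₁ W₂ : Matrix (Fin 2) (Fin 2) ℂ,
      W₁ ∈ Matrix.unitaryGroup (Fin 2) ℂ ∧ W₂ ∈ Matrix.unitaryGroup (Fin 2) ℂ ∧
      ∀ X, (p:ℂ) • (U * X * Uᴴ) + (q:ℂ) • (V * X * Vᴴ) =
           (r:ℂ) • (W₁ * X * W₁ᴴ) + (s:ℂ) • (W₂ * X * W₂ᴴ) := by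
  obtain ⟨U₀, hU₀, hdU₀, hUX⟩ := su2_reduce U hU
  obtain ⟨V₀, hV₀, hdV₀, hVX⟩ := su2_reduce V hV
  have hU₀1 : U₀ * U₀ᴴ = 1 := by
    have := (Matrix.mem_unitaryGroup_iff).mp hU₀
    rwa [Matrix.star_eq_conjTranspose] at this
  have hV₀1 : V₀ * V₀ᴴ = 1 := by
    have := (Matrix.mem_unitaryGroup_iff).mp hV₀
    rwa [Matrix.star_eq_conjTranspose] at this
  set S : Matrix (Fin 2) (Fin 2) ℂ := U₀ᴴ * V₀ with hS
  have hSmem : S ∈ Matrix.unitaryGroup (Fin 2) ℂ := by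
    rw [hS, ← Matrix.star_eq_conjTranspose]
    exact mul_mem (Unitary.star_mem hU₀) hV₀
  have hS1 : S * Sᴴ = 1 := by
    have := (Matrix.mem_unitaryGroup_iff).mp hSmem
    rwa [Matrix.star_eq_conjTranspose] at this
  have hdS : S.det = 1 := by
    rw [hS, Matrix.det_mul, Matrix.det_conjTranspose, hdU₀, hdV₀]
    simp
  have hV₀S : U₀ * S = V₀ := by
    rw [hS, ← Matrix.mul_assoc, hU₀1, Matrix.one_mul]
  have hadj : Sᴴ = S.trace • (1 : Matrix (Fin 2) (Fin 2) ℂ) - S := by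
    have h1 : S⁻¹ = Sᴴ := Matrix.inv_eq_right_inv hS1
    have h2 : S⁻¹ = S.adjugate := by
      rw [Matrix.inv_def, hdS]; simp
    rw [← h1, h2, Matrix.adjugate_fin_two, Matrix.trace_fin_two]
    ext i j
    fin_cases i <;> fin_cases j <;> simp [Matrix.one_apply] <;> ring
  have htreal : star S.trace = S.trace := by
    have h1 : Sᴴ.trace = star S.trace := Matrix.trace_conjTranspose S
    rw [hadj] at h1
    rw [Matrix.trace_sub, Matrix.trace_smul, Matrix.trace_one] at h1
    simp at h1
    rw [show star S.trace = (starRingEnd ℂ) S.trace from rfl, ← h1]; ring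
  set T : ℝ := S.trace.re with hT
  have htT : S.trace = (T : ℂ) := by
    rw [hT]
    exact (Complex.conj_eq_iff_re.mp htreal).symm
  -- entry norm facts
  have hrow0 : Complex.normSq (S 0 0) + Complex.normSq (S 0 1) = 1 := by
    have h := congrFun (congrFun hS1 0) 0
    rw [Matrix.mul_apply, Fin.sum_univ_two] at h
    simp only [Matrix.conjTranspose_apply, Matrix.one_apply_eq] at h
    have : (Complex.normSq (S 0 0) : ℂ) + (Complex.normSq (S 0 1) : ℂ) = 1 := by
      rw [← Complex.mul_conj, ← Complex.mul_conj]
      exact h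
    exact_mod_cast this
  have hrow1 : Complex.normSq (S 1 0) + Complex.normSq (S 1 1) = 1 := by
    have h := congrFun (congrFun hS1 1) 1
    rw [Matrix.mul_apply, Fin.sum_univ_two] at h
    simp only [Matrix.conjTranspose_apply, Matrix.one_apply_eq] at h
    have : (Complex.normSq (S 1 0) : ℂ) + (Complex.normSq (S 1 1) : ℂ) = 1 := by
      rw [← Complex.mul_conj, ← Complex.mul_conj]
      exact h
    exact_mod_cast this
  have hTval : T = (S 0 0).re + (S 1 1).re := by
    rw [hT, Matrix.trace_fin_two, Complex.add_re]
  have hrow0' : (S 0 0).re^2 + (S 0 0).im^2 + Complex.normSq (S 0 1) = 1 := by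
    rw [show Complex.normSq (S 0 0) = (S 0 0).re*(S 0 0).re + (S 0 0).im*(S 0 0).im from
      Complex.normSq_apply _] at hrow0
    rw [sq, sq]; linarith
  have hrow1' : (S 1 1).re^2 + (S 1 1).im^2 + Complex.normSq (S 1 0) = 1 := by
    rw [show Complex.normSq (S 1 1) = (S 1 1).re*(S 1 1).re + (S 1 1).im*(S 1 1).im from
      Complex.normSq_apply _] at hrow1
    rw [sq, sq]; linarith
  have hT4 : T ^ 2 ≤ 4 := by
    rw [hTval]
    exact bound_real _ _ _ _ _ _ hrow0' hrow1' (Complex.normSq_nonneg _) (Complex.normSq_nonneg _)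
  rcases eq_or_lt_of_le hT4 with hT4e | hT4lt
  · -- degenerate case: S = ±1, V₀ = ±U₀
    obtain ⟨hb, hd, hn01, hn10, hacc⟩ :=
      deg_real _ _ _ _ _ _ hrow0' hrow1' (Complex.normSq_nonneg _) (Complex.normSq_nonneg _)
        (by rw [← hTval]; exact hT4e)
    set c := (S 0 0).re with hcdef
    have hS00 : S 0 0 = ((c : ℝ) : ℂ) := by
      exact Complex.ext (by simp [hcdef]) (by simp [hb])
    have hSeq : S = ((c:ℝ) : ℂ) • (1 : Matrix (Fin 2) (Fin 2) ℂ) := by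
      have h01 : S 0 1 = 0 := Complex.normSq_eq_zero.mp hn01
      have h10 : S 1 0 = 0 := Complex.normSq_eq_zero.mp hn10
      have hS11 : S 1 1 = ((c:ℝ) : ℂ) := Complex.ext (by simpa using hacc.symm) (by simp [hd])
      ext i j
      fin_cases i <;> fin_cases j <;>
        simp [h01, h10, hS11, Matrix.one_apply, hS00.symm]
    have hre1r : c * c = 1 := by nlinarith
    have hre1 : ((c:ℝ) : ℂ) * ((c:ℝ) : ℂ) = 1 := by exact_mod_cast hre1r
    have hVU : ∀ X, V₀ * X * V₀ᴴ = U₀ * X * U₀ᴴ := by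
      intro X
      have hV0eq : V₀ = ((c:ℝ) : ℂ) • U₀ := by
        rw [← hV₀S, hSeq, Matrix.mul_smul, Matrix.mul_one]
      rw [hV0eq, Matrix.conjTranspose_smul, Complex.star_def, Complex.conj_ofReal]
      rw [Matrix.smul_mul, Matrix.smul_mul, Matrix.mul_smul, smul_smul, hre1, one_smul]
    refine ⟨U₀, U₀, hU₀, hU₀, fun X => ?_⟩
    rw [hUX, hVX, hVU, ← add_smul, ← add_smul]
    norm_cast
    rw [hsum]
  · -- main case T² < 4
    have hm2' : (0:ℝ) < 1 - T^2/4 := by nlinarith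
    set m := Real.sqrt (1 - T^2/4) with hmdef
    have hm2 : m^2 = 1 - T^2/4 := Real.sq_sqrt (le_of_lt hm2')
    have hm0 : 0 < m := Real.sqrt_pos.mpr hm2'
    set x0 : ℝ := p + q*(T^2/2 - 1) with hx0
    set y0 : ℝ := q*T*m with hy0
    set w : ℂ := (x0:ℝ) + (y0:ℝ)*I with hw
    have hnw : ‖w‖^2 = x0^2 + y0^2 := by
      rw [hw, Complex.sq_norm, Complex.normSq_add_mul_I]
    have hwval : x0^2 + y0^2 = p^2 + q^2 + p*q*(T^2-2) := by
      rw [hx0, hy0]; linear_combination (q^2*T^2)*hm2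
    have hsqmaj : (r-s)^2 ≤ (p-q)^2 := by
      have h := pow_le_pow_left₀ (abs_nonneg (r-s)) hmaj 2
      rwa [_root_.sq_abs, _root_.sq_abs] at h
    have hlow : |r - s| ≤ ‖w‖ := by
      have h2 : (r-s)^2 ≤ ‖w‖^2 := by
        rw [hnw, hwval]
        nlinarith [mul_nonneg (mul_nonneg hp hq) (sq_nonneg T)]
      nlinarith [norm_nonneg w, abs_nonneg (r-s), _root_.sq_abs (r-s)]
    have hhigh : ‖w‖ ≤ r + s := by
      have h2 : ‖w‖^2 ≤ (r+s)^2 := by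
        rw [hnw, hwval, ← hsum]
        nlinarith [mul_nonneg hp hq]
      nlinarith [norm_nonneg w]
    obtain ⟨u₁, u₂, hu₁, hu₂, husum⟩ := annulus r s w hr hs hlow hhigh
    obtain ⟨z₁, hz₁a, hz₁⟩ := unit_sqrt u₁ hu₁
    obtain ⟨z₂, hz₂a, hz₂⟩ := unit_sqrt u₂ hu₂
    rw [← hz₁, ← hz₂] at husum
    set x1 := z₁.re with hx1d
    set y1 := z₁.im with hy1d
    set x2 := z₂.re with hx2d
    set y2 := z₂.im with hy2d
    have e1 : x1^2 + y1^2 = 1 := by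
      have h : Complex.normSq z₁ = 1 := by
        rw [← Complex.sq_norm, hz₁a]; norm_num
      rw [Complex.normSq_apply] at h
      rw [sq, sq]; exact h
    have e2 : x2^2 + y2^2 = 1 := by
      have h : Complex.normSq z₂ = 1 := by
        rw [← Complex.sq_norm, hz₂a]; norm_num
      rw [Complex.normSq_apply] at h
      rw [sq, sq]; exact h
    have hre : r*(x1^2 - y1^2) + s*(x2^2 - y2^2) = x0 := by
      have h := congrArg Complex.re husum
      simp only [Complex.add_re, Complex.mul_re, Complex.ofReal_re, Complex.ofReal_im,
        pow_two, Complex.mul_im, hw, Complex.add_im, Complex.I_re, Complex.I_im,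
        Complex.mul_re] at h
      ring_nf at h ⊢
      linarith [h]
    have him : r*(2*x1*y1) + s*(2*x2*y2) = y0 := by
      have h := congrArg Complex.im husum
      simp only [Complex.add_im, Complex.mul_im, Complex.ofReal_re, Complex.ofReal_im,
        pow_two, Complex.mul_re, hw, Complex.add_re, Complex.I_re, Complex.I_im] at h
      ring_nf at h ⊢
      linarith [h]
    set b1 : ℝ := y1/m with hb1d
    set a1 : ℝ := x1 - (T/2)*b1 with ha1d
    set b2 : ℝ := y2/m with hb2d
    set a2 : ℝ := x2 - (T/2)*b2 with ha2d
    have hx1e : x1 = a1 + (T/2)*b1 := by rw [ha1d]; ring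
    have hy1e : y1 = b1*m := by rw [hb1d]; field_simp
    have hx2e : x2 = a2 + (T/2)*b2 := by rw [ha2d]; ring
    have hy2e : y2 = b2*m := by rw [hb2d]; field_simp
    rw [hx1e, hy1e] at e1
    rw [hx2e, hy2e] at e2
    rw [hx1e, hy1e, hx2e, hy2e] at hre him
    rw [hx0] at hre
    rw [hy0] at him
    have h4 : T^2/2 - 2 ≠ 0 := ne_of_lt (by linarith)
    have hCsub : (T^2/2 - 2) * ((r*b1^2 + s*b2^2) - q) = 0 := by
      linear_combination hre - r*e1 - s*e2 + hsum + (2*(r*b1^2+s*b2^2))*hm2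
    have hC : r*b1^2 + s*b2^2 = q := by
      rcases mul_eq_zero.mp hCsub with h | h
      · exact absurd h h4
      · linarith [h]
    have E1' : r*(2*a1*b1 + T*b1^2) + s*(2*a2*b2 + T*b2^2) = q*T := by
      apply mul_left_cancel₀ (ne_of_gt hm0)
      linear_combination him
    have hB : r*(a1*b1) + s*(a2*b2) = 0 := by
      linear_combination (1/2)*E1' - (T/2)*hC
    have hA : r*a1^2 + s*a2^2 = p := by
      linear_combination r*e1 + s*e2 - hsum - T*hB - hC - (r*b1^2+s*b2^2)*hm2
    have he1' : a1^2 + b1^2 + T*(a1*b1) = 1 := by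
      linear_combination e1 - b1^2*hm2
    have he2' : a2^2 + b2^2 + T*(a2*b2) = 1 := by
      linear_combination e2 - b2^2*hm2
    -- complex casts
    have hAc : (r:ℂ)*(a1:ℂ)^2 + (s:ℂ)*(a2:ℂ)^2 = (p:ℂ) := by exact_mod_cast hA
    have hBc : (r:ℂ)*((a1:ℂ)*(b1:ℂ)) + (s:ℂ)*((a2:ℂ)*(b2:ℂ)) = 0 := by exact_mod_cast hB
    have hCc : (r:ℂ)*(b1:ℂ)^2 + (s:ℂ)*(b2:ℂ)^2 = (q:ℂ) := by exact_mod_cast hC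
    have he1c : (a1:ℂ)^2 + (b1:ℂ)^2 + (T:ℂ)*((a1:ℂ)*(b1:ℂ)) = 1 := by exact_mod_cast he1'
    have he2c : (a2:ℂ)^2 + (b2:ℂ)^2 + (T:ℂ)*((a2:ℂ)*(b2:ℂ)) = 1 := by exact_mod_cast he2'
    -- matrices
    have hSH : Sᴴ = (T:ℂ) • (1 : Matrix (Fin 2) (Fin 2) ℂ) - S := by rw [hadj, htT]
    have hS2 : S * S = (T:ℂ) • S - 1 := by
      have h := hS1
      rw [hSH, Matrix.mul_sub, Matrix.mul_smul, Matrix.mul_one] at h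
      rw [← h]; abel
    set C1 : Matrix (Fin 2) (Fin 2) ℂ := (a1:ℂ) • 1 + (b1:ℂ) • S with hC1d
    set C2 : Matrix (Fin 2) (Fin 2) ℂ := (a2:ℂ) • 1 + (b2:ℂ) • S with hC2d
    have hC1H : C1ᴴ = (a1:ℂ) • 1 + (b1:ℂ) • Sᴴ := by
      rw [hC1d, Matrix.conjTranspose_add, Matrix.conjTranspose_smul, Matrix.conjTranspose_smul,
        Matrix.conjTranspose_one, Complex.star_def, Complex.conj_ofReal, Complex.conj_ofReal]
    have hC2H : C2ᴴ = (a2:ℂ) • 1 + (b2:ℂ) • Sᴴ := by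
      rw [hC2d, Matrix.conjTranspose_add, Matrix.conjTranspose_smul, Matrix.conjTranspose_smul,
        Matrix.conjTranspose_one, Complex.star_def, Complex.conj_ofReal, Complex.conj_ofReal]
    have hCCH1 : C1 * C1ᴴ = 1 := by
      rw [hC1H, hSH, hC1d]
      simp only [Matrix.add_mul, Matrix.mul_add, Matrix.smul_mul, Matrix.mul_smul,
        Matrix.one_mul, Matrix.mul_one, Matrix.mul_sub, Matrix.sub_mul, smul_sub, smul_smul, hS2]
      match_scalars
      · linear_combination he1c
      · ring
    have hCCH2 : C2 * C2ᴴ = 1 := by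
      rw [hC2H, hSH, hC2d]
      simp only [Matrix.add_mul, Matrix.mul_add, Matrix.smul_mul, Matrix.mul_smul,
        Matrix.one_mul, Matrix.mul_one, Matrix.mul_sub, Matrix.sub_mul, smul_sub, smul_smul, hS2]
      match_scalars
      · linear_combination he2c
      · ring
    have hW1mem : U₀ * C1 ∈ Matrix.unitaryGroup (Fin 2) ℂ := by
      rw [Matrix.mem_unitaryGroup_iff, Matrix.star_eq_conjTranspose, Matrix.conjTranspose_mul]
      calc U₀ * C1 * (C1ᴴ * U₀ᴴ) = U₀ * (C1 * C1ᴴ) * U₀ᴴ := by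
            simp only [Matrix.mul_assoc]
        _ = 1 := by rw [hCCH1, Matrix.mul_one, hU₀1]
    have hW2mem : U₀ * C2 ∈ Matrix.unitaryGroup (Fin 2) ℂ := by
      rw [Matrix.mem_unitaryGroup_iff, Matrix.star_eq_conjTranspose, Matrix.conjTranspose_mul]
      calc U₀ * C2 * (C2ᴴ * U₀ᴴ) = U₀ * (C2 * C2ᴴ) * U₀ᴴ := by
            simp only [Matrix.mul_assoc]
        _ = 1 := by rw [hCCH2, Matrix.mul_one, hU₀1]
    refine ⟨U₀ * C1, U₀ * C2, hW1mem, hW2mem, fun X => ?_⟩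
    have inner : (p:ℂ) • X + (q:ℂ) • (S * X * Sᴴ) =
        (r:ℂ) • (C1 * X * C1ᴴ) + (s:ℂ) • (C2 * X * C2ᴴ) := by
      rw [hC1H, hC2H, hSH, hC1d, hC2d]
      simp only [Matrix.add_mul, Matrix.mul_add, Matrix.smul_mul, Matrix.mul_smul,
        Matrix.one_mul, Matrix.mul_one, Matrix.mul_sub, Matrix.sub_mul, smul_sub, smul_smul,
        Matrix.mul_assoc]
      match_scalars
      · linear_combination -hAc - (T:ℂ)*hBc
      · linear_combination -hBc - (T:ℂ)*hCc
      · linear_combination hCc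
      · linear_combination hBc
    rw [hUX X, hVX X, ← hV₀S]
    calc (p:ℂ) • (U₀ * X * U₀ᴴ) + (q:ℂ) • (U₀ * S * X * (U₀ * S)ᴴ)
        = U₀ * ((p:ℂ) • X + (q:ℂ) • (S * X * Sᴴ)) * U₀ᴴ := by
          rw [Matrix.conjTranspose_mul]
          simp only [Matrix.mul_add, Matrix.add_mul, Matrix.mul_smul, Matrix.smul_mul,
            Matrix.mul_assoc]
      _ = U₀ * ((r:ℂ) • (C1 * X * C1ᴴ) + (s:ℂ) • (C2 * X * C2ᴴ)) * U₀ᴴ := by rw [inner]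
      _ = (r:ℂ) • (U₀ * C1 * X * (U₀ * C1)ᴴ) + (s:ℂ) • (U₀ * C2 * X * (U₀ * C2)ᴴ) := by
          rw [Matrix.conjTranspose_mul, Matrix.conjTranspose_mul]
          simp only [Matrix.mul_add, Matrix.add_mul, Matrix.mul_smul, Matrix.smul_mul,
            Matrix.mul_assoc]

lemma flatten (w : ℝ) (hw : 0 ≤ w) :
    ∀ n (p : Fin n → ℝ), (∀ i, 0 ≤ p i) → (∑ i, p i = n * w) →
    ∀ U : Fin n → Matrix (Fin 2) (Fin 2) ℂ, (∀ i, U i ∈ Matrix.unitaryGroup (Fin 2) ℂ) →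
    ∃ V : Fin n → Matrix (Fin 2) (Fin 2) ℂ,
      (∀ i, V i ∈ Matrix.unitaryGroup (Fin 2) ℂ) ∧
      ∀ X, ∑ i, (p i : ℂ) • (U i * X * (U i)ᴴ) = ∑ i, (w:ℂ) • (V i * X * (V i)ᴴ) := by
  intro n
  induction n with
  | zero =>
    intro p _ _ U hU
    exact ⟨U, hU, fun X => by simp⟩
  | succ n ih =>
    intro p hp0 hpsum U hU
    by_cases hn : n = 0
    · subst hn
      refine ⟨U, hU, fun X => ?_⟩
      refine Finset.sum_congr rfl (fun i _ => ?_)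
      have hi : i = 0 := Fin.fin_one_eq_zero i
      have hp0w : p 0 = w := by
        rw [Fin.sum_univ_one] at hpsum
        push_cast at hpsum
        linarith
      rw [hi, hp0w]
    -- find argmax
    obtain ⟨i₀, -, hi₀⟩ := Finset.exists_max_image Finset.univ p ⟨0, Finset.mem_univ 0⟩
    have hmax : w ≤ p i₀ := by
      by_contra h
      push_neg at h
      have hlt : ∑ i, p i < ∑ _i : Fin (n+1), w :=
        Finset.sum_lt_sum_of_nonempty Finset.univ_nonempty
          (fun i _ => lt_of_le_of_lt (hi₀ i (Finset.mem_univ i)) h)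
      rw [Finset.sum_const, Finset.card_univ, Fintype.card_fin, nsmul_eq_mul] at hlt
      rw [hpsum] at hlt
      push_cast at hlt
      linarith
    set σ := Equiv.swap i₀ (Fin.last n) with hσ
    set g : Fin (n+1) → ℝ := fun i => p (σ i) with hg
    set B : Fin (n+1) → Matrix (Fin 2) (Fin 2) ℂ := fun i => U (σ i) with hB
    have hg0 : ∀ i, 0 ≤ g i := fun i => hp0 _
    have hB0 : ∀ i, B i ∈ Matrix.unitaryGroup (Fin 2) ℂ := fun i => hU _
    have hgsum : ∑ i, g i = (n+1) * w := by
      rw [hg]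
      rw [show ∑ i, p (σ i) = ∑ i, p i from Equiv.sum_comp σ p]
      rw [hpsum]; push_cast; ring
    have hglast : w ≤ g (Fin.last n) := by
      have : σ (Fin.last n) = i₀ := Equiv.swap_apply_right i₀ (Fin.last n)
      rw [hg]; simp only [this]; exact hmax
    have hgmax : ∀ i, g i ≤ g (Fin.last n) := by
      intro i
      have h1 : σ (Fin.last n) = i₀ := Equiv.swap_apply_right i₀ (Fin.last n)
      rw [hg]; simp only [h1]
      exact hi₀ _ (Finset.mem_univ _)
    -- find j₀ with g (castSucc j₀) ≤ w
    have hne : (Finset.univ : Finset (Fin n)).Nonempty := by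
      rw [Finset.univ_nonempty_iff]
      exact Fin.pos_iff_nonempty.mp (Nat.pos_of_ne_zero hn)
    obtain ⟨j₀, hj₀⟩ : ∃ j : Fin n, g (Fin.castSucc j) ≤ w := by
      by_contra h
      push_neg at h
      have hlt : ∑ _i : Fin n, w < ∑ i : Fin n, g (Fin.castSucc i) :=
        Finset.sum_lt_sum_of_nonempty hne (fun i _ => h i)
      rw [Finset.sum_const, Finset.card_univ, Fintype.card_fin, nsmul_eq_mul] at hlt
      have htot := hgsum
      rw [Fin.sum_univ_castSucc] at htot
      have := hglast
      push_cast at htot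
      nlinarith
    -- apply two_term
    set pl := g (Fin.last n) with hpl
    set pj := g (Fin.castSucc j₀) with hpj
    set s' := pl + pj - w with hs'
    have hs'0 : 0 ≤ s' := by rw [hs']; linarith [hg0 (Fin.castSucc j₀)]
    obtain ⟨W₁, W₂, hW₁, hW₂, hWX⟩ :=
      two_term (B (Fin.last n)) (B (Fin.castSucc j₀)) (hB0 _) (hB0 _)
        pl pj w s' (hg0 _) (hg0 _) hw hs'0 (by rw [hs']; ring)
        (by
          rw [_root_.abs_of_nonneg (by linarith : (0:ℝ) ≤ pl - pj)]
          apply abs_le.mpr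
          constructor <;> [skip; skip] <;> rw [hs'] <;> linarith)
    -- new data on Fin n
    set g' : Fin n → ℝ := Function.update (fun i => g (Fin.castSucc i)) j₀ s' with hg'
    set B' : Fin n → Matrix (Fin 2) (Fin 2) ℂ := Function.update (fun i => B (Fin.castSucc i)) j₀ W₂ with hB'
    have hg'0 : ∀ i, 0 ≤ g' i := by
      intro i
      rw [hg', Function.update_apply]
      split
      · exact hs'0
      · exact hg0 _
    have hB'0 : ∀ i, B' i ∈ Matrix.unitaryGroup (Fin 2) ℂ := by
      intro i
      rw [hB', Function.update_apply]
      split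
      · exact hW₂
      · exact hB0 _
    have hg'sum : ∑ i, g' i = n * w := by
      rw [hg', Finset.sum_update_of_mem (Finset.mem_univ j₀)]
      have hsplit2 : pj + ∑ i ∈ Finset.univ.erase j₀, g (Fin.castSucc i)
          = ∑ i : Fin n, g (Fin.castSucc i) := by
        rw [hpj]
        exact Finset.add_sum_erase Finset.univ (fun i => g (Fin.castSucc i)) (Finset.mem_univ j₀)
      rw [Finset.erase_eq] at hsplit2
      have htot := hgsum
      rw [Fin.sum_univ_castSucc] at htot
      push_cast at htot
      rw [hs']; push_cast; linarith
    obtain ⟨V', hV'0, hV'X⟩ := ih g' hg'0 hg'sum B' hB'0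
    refine ⟨Fin.snoc V' W₁, ?_, ?_⟩
    · intro i
      refine Fin.lastCases ?_ (fun j => ?_) i
      · rw [Fin.snoc_last]; exact hW₁
      · rw [Fin.snoc_castSucc]; exact hV'0 j
    · intro X
      have hstep0 : ∑ i, (p i : ℂ) • (U i * X * (U i)ᴴ)
          = ∑ i, (g i : ℂ) • (B i * X * (B i)ᴴ) :=
        (Equiv.sum_comp σ (fun i => (p i : ℂ) • (U i * X * (U i)ᴴ))).symm
      have hsplit : ∑ i, (g i : ℂ) • (B i * X * (B i)ᴴ)
          = (∑ i ∈ Finset.univ.erase j₀,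
              (g (Fin.castSucc i) : ℂ) • (B (Fin.castSucc i) * X * (B (Fin.castSucc i))ᴴ))
            + ((pj : ℂ) • (B (Fin.castSucc j₀) * X * (B (Fin.castSucc j₀))ᴴ)
              + (pl : ℂ) • (B (Fin.last n) * X * (B (Fin.last n))ᴴ)) := by
        rw [Fin.sum_univ_castSucc]
        rw [← Finset.add_sum_erase Finset.univ
          (fun i => (g (Fin.castSucc i) : ℂ) • (B (Fin.castSucc i) * X * (B (Fin.castSucc i))ᴴ))
          (Finset.mem_univ j₀)]
        rw [hpj, hpl]
        abel
      have hnew : ∑ i, (g' i : ℂ) • (B' i * X * (B' i)ᴴ)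
          = (s' : ℂ) • (W₂ * X * W₂ᴴ)
            + ∑ i ∈ Finset.univ.erase j₀,
              (g (Fin.castSucc i) : ℂ) • (B (Fin.castSucc i) * X * (B (Fin.castSucc i))ᴴ) := by
        rw [← Finset.add_sum_erase Finset.univ
          (fun i => (g' i : ℂ) • (B' i * X * (B' i)ᴴ)) (Finset.mem_univ j₀)]
        have h1 : g' j₀ = s' := by rw [hg']; exact Function.update_self _ _ _
        have h2 : B' j₀ = W₂ := by rw [hB']; exact Function.update_self _ _ _
        rw [h1, h2]
        congr 1
        refine Finset.sum_congr rfl (fun i hi => ?_)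
        have hine : i ≠ j₀ := (Finset.mem_erase.mp hi).1
        have h3 : g' i = g (Fin.castSucc i) := by rw [hg']; exact Function.update_of_ne hine _ _
        have h4 : B' i = B (Fin.castSucc i) := by rw [hB']; exact Function.update_of_ne hine _ _
        rw [h3, h4]
      calc ∑ i, (p i : ℂ) • (U i * X * (U i)ᴴ)
          = (∑ i ∈ Finset.univ.erase j₀,
              (g (Fin.castSucc i) : ℂ) • (B (Fin.castSucc i) * X * (B (Fin.castSucc i))ᴴ))
            + ((pl : ℂ) • (B (Fin.last n) * X * (B (Fin.last n))ᴴ)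
              + (pj : ℂ) • (B (Fin.castSucc j₀) * X * (B (Fin.castSucc j₀))ᴴ)) := by
            rw [hstep0, hsplit]; abel
        _ = (∑ i ∈ Finset.univ.erase j₀,
              (g (Fin.castSucc i) : ℂ) • (B (Fin.castSucc i) * X * (B (Fin.castSucc i))ᴴ))
            + ((w : ℂ) • (W₁ * X * W₁ᴴ) + (s' : ℂ) • (W₂ * X * W₂ᴴ)) := by
            rw [hWX X]
        _ = (∑ i, (g' i : ℂ) • (B' i * X * (B' i)ᴴ)) + (w : ℂ) • (W₁ * X * W₁ᴴ) := by
            rw [hnew]; abel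
        _ = (∑ i, (w:ℂ) • (V' i * X * (V' i)ᴴ)) + (w : ℂ) • (W₁ * X * W₁ᴴ) := by
            rw [hV'X X]
        _ = ∑ i, (w:ℂ) • ((Fin.snoc V' W₁ : Fin (n+1) → Matrix (Fin 2) (Fin 2) ℂ) i * X
              * ((Fin.snoc V' W₁ : Fin (n+1) → Matrix (Fin 2) (Fin 2) ℂ) i)ᴴ) := by
            rw [Fin.sum_univ_castSucc]
            simp only [Fin.snoc_castSucc, Fin.snoc_last]

/-- Corollary 3 of the paper: if `T(X) = Σᵢ pᵢ·UᵢXUᵢ†` for a probability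
distribution `p` and unitaries `Uᵢ ∈ U(2)`, then there exist unitaries `Vᵢ ∈ U(2)` with
`T(X) = (1/k)·Σᵢ VᵢXVᵢ†` for all `X ∈ M₂(ℂ)`. -/
theorem mixed_unitary_flat_weights
    (k : ℕ) (p : Fin k → ℝ)
    (hp0 : ∀ i, 0 ≤ p i) (hp1 : ∑ i, p i = 1)
    (U : Fin k → Matrix (Fin 2) (Fin 2) ℂ)
    (hU : ∀ i, U i ∈ Matrix.unitaryGroup (Fin 2) ℂ) :
    ∃ V : Fin k → Matrix (Fin 2) (Fin 2) ℂ,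
      (∀ i, V i ∈ Matrix.unitaryGroup (Fin 2) ℂ) ∧
      ∀ X : Matrix (Fin 2) (Fin 2) ℂ,
        ∑ i, (p i : ℂ) • (U i * X * (U i)ᴴ) = (k : ℂ)⁻¹ • ∑ i, V i * X * (V i)ᴴ := by
  have hk : k ≠ 0 := by
    rintro rfl
    simp at hp1
  have hkR : (k:ℝ) ≠ 0 := Nat.cast_ne_zero.mpr hk
  obtain ⟨V, hV0, hVX⟩ := flatten (1/k) (by positivity) k p hp0
    (by rw [hp1]; field_simp) U hU
  refine ⟨V, hV0, fun X => ?_⟩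
  rw [hVX X, Finset.smul_sum]
  refine Finset.sum_congr rfl (fun i _ => ?_)
  congr 1
  push_cast
  rw [one_div]
end

section
/- Let T : M_d(ℂ) → M_d(ℂ) be a quantum channel, i.e. a linear map that is completely positive (its Choi matrix Σ_{i,j} E_{ij} ⊗ T(E_{ij}) is positive semidefinite) and trace preserving, and let R = R(T) be its Kraus rank. Then there exist matrices A₁, …, A_R ∈ M_d(ℂ) with Tr(A_i†A_i) = d for every i such that T(X) = (1/R)·Σ_{i=1}^R A_iXA_i† for all X ∈ M_d(ℂ). -/
open Matrix Kronecker BigOperators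
open scoped ComplexOrder

/-- The Choi matrix `Σ_{i,j} E_{ij} ⊗ T(E_{ij})` of a map on `M_d(ℂ)`. -/
noncomputable def choi {d : ℕ}
    (T : Matrix (Fin d) (Fin d) ℂ → Matrix (Fin d) (Fin d) ℂ) :
    Matrix (Fin d × Fin d) (Fin d × Fin d) ℂ :=
  ∑ i : Fin d, ∑ j : Fin d,
    Matrix.single i j (1 : ℂ) ⊗ₖ T (Matrix.single i j (1 : ℂ))

/-- The Kraus rank of a map on `M_d(ℂ)`: the rank of its Choi matrix. -/
noncomputable def krausRank {d : ℕ}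
    (T : Matrix (Fin d) (Fin d) ℂ → Matrix (Fin d) (Fin d) ℂ) : ℕ :=
  (choi T).rank

open Complex in
lemma dft_sum (R : ℕ) (s s' : Fin R) :
    ∑ t : Fin R, (Complex.exp (2 * Real.pi * Complex.I / R)) ^ ((t : ℕ) * (s : ℕ)) *
      (starRingEnd ℂ) ((Complex.exp (2 * Real.pi * Complex.I / R)) ^ ((t : ℕ) * (s' : ℕ))) =
      if s = s' then (R : ℂ) else 0 := by
  have hR : 0 < R := s.pos
  set ζ : ℂ := Complex.exp (2 * Real.pi * Complex.I / R) with hζdef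
  have hζne : ζ ≠ 0 := Complex.exp_ne_zero _
  have hconj : (starRingEnd ℂ) ζ = ζ⁻¹ := by
    rw [hζdef, ← Complex.exp_conj, ← Complex.exp_neg]
    congr 1
    simp [map_div₀, Complex.conj_I, map_ofNat]
    ring
  have hζR : ζ ^ (R : ℕ) = 1 := by
    rw [hζdef, ← Complex.exp_nat_mul]
    have hcalc : (R:ℂ) * (2 * Real.pi * Complex.I / R) = 2 * Real.pi * Complex.I := by
      field_simp
    rw [hcalc]
    exact Complex.exp_two_pi_mul_I
  have key : ∀ t : Fin R, ζ ^ ((t : ℕ) * (s : ℕ)) * (starRingEnd ℂ) (ζ ^ ((t : ℕ) * (s' : ℕ)))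
      = (ζ ^ ((s : ℤ) - (s' : ℤ))) ^ (t : ℕ) := by
    intro t
    rw [map_pow, hconj]
    rw [← zpow_natCast ζ ((t : ℕ) * (s : ℕ)), ← zpow_natCast ζ⁻¹ ((t : ℕ) * (s' : ℕ)),
      _root_.inv_zpow, ← _root_.zpow_neg, ← zpow_add₀ hζne, ← zpow_natCast (ζ ^ ((s : ℤ) - (s' : ℤ))),
      ← _root_.zpow_mul]
    congr 1
    push_cast
    ring
  simp only [key]
  rw [Fin.sum_univ_eq_sum_range (fun t => (ζ ^ ((s : ℤ) - (s' : ℤ))) ^ t)]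
  by_cases hss : s = s'
  · rw [if_pos hss, hss, sub_self, zpow_zero]
    simp
  · rw [if_neg hss]
    have hm0 : (s : ℤ) - (s' : ℤ) ≠ 0 := by
      intro h; exact hss (Fin.ext (by omega))
    set m : ℤ := (s : ℤ) - (s' : ℤ) with hm
    have hx1 : ζ ^ m ≠ 1 := by
      intro h
      rw [hζdef, ← Complex.exp_int_mul, Complex.exp_eq_one_iff] at h
      obtain ⟨n, hn⟩ := h
      have h2 : (2 * (Real.pi : ℂ) * Complex.I) ≠ 0 := by
        simp [Real.pi_ne_zero, Complex.I_ne_zero, Complex.ofReal_ne_zero]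
      have hRne : (R : ℂ) ≠ 0 := by exact_mod_cast hR.ne'
      have : (m : ℂ) = n * R := by
        field_simp at hn
        have := mul_right_cancel₀ h2 (by linear_combination (2 * Real.pi * Complex.I) * hn : (m:ℂ) * (2 * Real.pi * Complex.I) = (n * R) * (2 * Real.pi * Complex.I))
        exact this
      have hmz : m = n * R := by exact_mod_cast this
      have hn0 : n ≠ 0 := by rintro rfl; simp at hmz; exact hm0 hmz
      have h1 : |m| < R := by
        rw [hm, abs_sub_lt_iff]
        constructor <;> [skip; skip] <;> (have := s.isLt; have := s'.isLt; push_cast; omega)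
      have h3 : (R : ℤ) ≤ |m| := by
        rw [hmz, abs_mul, abs_of_nonneg (by positivity : (0:ℤ) ≤ (R:ℤ))]
        nlinarith [Int.one_le_abs hn0]
      omega
    have hxR : (ζ ^ m) ^ R = 1 := by
      rw [← zpow_natCast (ζ ^ m), ← _root_.zpow_mul, mul_comm, _root_.zpow_mul, zpow_natCast, hζR, _root_.one_zpow]
    rw [geom_sum_eq hx1, hxR]
    simp


/-- consequence of Choi–Wu, as discussed in the paper: every quantum channel
`T : M_d(ℂ) → M_d(ℂ)` of Kraus rank `R` admits a Kraus decomposition with equal weights `1/R`,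
`T(X) = (1/R)·Σᵢ₌₁ᴿ AᵢXAᵢ†`, where `Tr(Aᵢ†Aᵢ) = d` for every `i`. -/
theorem channel_flat_kraus_decomposition
    (d : ℕ)
    (T : Matrix (Fin d) (Fin d) ℂ →ₗ[ℂ] Matrix (Fin d) (Fin d) ℂ)
    (hCP : (choi fun X => T X).PosSemidef)
    (hTP : ∀ X : Matrix (Fin d) (Fin d) ℂ, (T X).trace = X.trace) :
    ∃ A : Fin (krausRank fun X => T X) → Matrix (Fin d) (Fin d) ℂ,
      (∀ i, ((A i)ᴴ * A i).trace = (d : ℂ)) ∧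
      ∀ X : Matrix (Fin d) (Fin d) ℂ,
        T X = ((krausRank fun X => T X : ℕ) : ℂ)⁻¹ • ∑ i, A i * X * (A i)ᴴ := by

  classical
  set C : Matrix (Fin d × Fin d) (Fin d × Fin d) ℂ := choi (fun X => T X) with hCdef
  have hH : C.IsHermitian := hCP.1
  set R : ℕ := krausRank (fun X => T X) with hRdef
  have hCard : Fintype.card {k // hH.eigenvalues k ≠ 0} = R := by
    rw [hRdef]; unfold krausRank; exact hH.rank_eq_card_non_zero_eigs.symm
  let e : Fin R ≃ {k // hH.eigenvalues k ≠ 0} := (Fintype.equivFinOfCardEq hCard).symm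
  set U : Matrix (Fin d × Fin d) (Fin d × Fin d) ℂ :=
    (hH.eigenvectorUnitary : Matrix (Fin d × Fin d) (Fin d × Fin d) ℂ) with hUdef
  set lam : Fin R → ℝ := fun t => hH.eigenvalues (e t) with hlamdef
  have hlamnn : ∀ t, 0 ≤ lam t := fun t => hCP.eigenvalues_nonneg _
  set v : Fin R → (Fin d × Fin d → ℂ) :=
    fun t x => (Real.sqrt (lam t) : ℂ) * U x (e t) with hvdef
  -- spectral decomposition entrywise
  have hUUentry : ∀ k l, (∑ x, (starRingEnd ℂ) (U x k) * U x l) = if k = l then 1 else 0 := by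
    intro k l
    have h1 : star U * U = 1 := by
      rw [hUdef]
      exact Matrix.UnitaryGroup.star_mul_self _
    have h2 := congrFun (congrFun (congrArg (fun M => (M : Matrix _ _ ℂ)) h1) k) l
    simpa [Matrix.mul_apply, Matrix.star_apply, RCLike.star_def, Matrix.one_apply] using h2
  have hspec : ∀ x y, C x y = ∑ k, U x k * ((hH.eigenvalues k : ℝ) : ℂ) * (starRingEnd ℂ) (U y k) := by
    intro x y
    conv_lhs => rw [hH.spectral_theorem, Unitary.conjStarAlgAut_apply]
    simp only [← hUdef, Matrix.mul_apply, Matrix.diagonal_apply, Function.comp_apply,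
      Matrix.star_apply, RCLike.star_def, mul_ite, mul_zero, ite_mul, zero_mul,
      Finset.sum_ite_eq, Finset.sum_ite_eq', Finset.mem_univ, if_true]
    rfl
  have hterm : ∀ (t : Fin R) x y, v t x * (starRingEnd ℂ) (v t y)
      = U x (e t) * ((hH.eigenvalues (e t) : ℝ) : ℂ) * (starRingEnd ℂ) (U y (e t)) := by
    intro t x y
    rw [hvdef]
    simp only [_root_.map_mul, Complex.conj_ofReal]
    rw [show ((Real.sqrt (lam t) : ℂ)) * U x (e t) * ((Real.sqrt (lam t) : ℂ) * (starRingEnd ℂ) (U y (e t)))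
      = (((Real.sqrt (lam t) * Real.sqrt (lam t) : ℝ) : ℂ)) * (U x (e t) * (starRingEnd ℂ) (U y (e t))) by push_cast; ring]
    rw [Real.mul_self_sqrt (hlamnn t)]
    rw [hlamdef]
    ring
  have F1 : ∀ x y, C x y = ∑ t : Fin R, v t x * (starRingEnd ℂ) (v t y) := by
    intro x y
    rw [hspec x y]
    rw [← Finset.sum_filter_of_ne (p := fun k => hH.eigenvalues k ≠ 0)
      (fun k _ hne => by
        intro h0
        apply hne
        rw [h0]
        push_cast
        ring)]
    rw [Finset.sum_subtype (p := fun k => hH.eigenvalues k ≠ 0)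
      (Finset.univ.filter (fun k => hH.eigenvalues k ≠ 0))
      (fun k => by simp) (fun k => U x k * ((hH.eigenvalues k : ℝ) : ℂ) * (starRingEnd ℂ) (U y k))]
    rw [← Equiv.sum_comp e (fun k => U x (k : _) * ((hH.eigenvalues (k : _) : ℝ) : ℂ) * (starRingEnd ℂ) (U y (k : _)))]
    exact Finset.sum_congr rfl (fun t _ => (hterm t x y).symm)
  -- orthogonality of the vectors
  have F2 : ∀ s t : Fin R, (∑ x, (starRingEnd ℂ) (v s x) * v t x)
      = if s = t then ((lam s : ℝ) : ℂ) else 0 := by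
    intro s t
    have : (∑ x, (starRingEnd ℂ) (v s x) * v t x)
        = ((Real.sqrt (lam s) : ℂ) * (Real.sqrt (lam t) : ℂ)) * ∑ x, (starRingEnd ℂ) (U x (e s)) * U x (e t) := by
      rw [Finset.mul_sum]
      refine Finset.sum_congr rfl (fun x _ => ?_)
      rw [hvdef]
      simp only [_root_.map_mul, Complex.conj_ofReal]
      ring
    rw [this, hUUentry (e s) (e t)]
    have hif : ((e s : Fin d × Fin d) = ((e t : Fin d × Fin d))) ↔ s = t := by
      constructor
      · intro h; exact e.injective (Subtype.ext h)
      · intro h; rw [h]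
    by_cases hst : s = t
    · subst hst
      rw [if_pos rfl, if_pos rfl, mul_one]
      rw [← Complex.ofReal_mul, Real.mul_self_sqrt (hlamnn s)]
    · rw [if_neg (fun h => hst (hif.mp h)), if_neg hst, mul_zero]
  -- trace of the Choi matrix is d
  have htrE : ∀ i j : Fin d, (Matrix.single i j (1:ℂ)).trace = if i = j then 1 else 0 := by
    intro i j
    by_cases h : i = j
    · subst h; rw [if_pos rfl]; exact Matrix.trace_single_eq_same (i := i) (c := (1:ℂ))
    · rw [if_neg h]; exact Matrix.trace_single_eq_of_ne (i := i) (j := j) (c := (1:ℂ)) h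
  have hTrC : C.trace = (d : ℂ) := by
    rw [hCdef]
    unfold choi
    rw [Matrix.trace_sum]
    simp only [Matrix.trace_sum, Matrix.trace_kronecker]
    have : ∀ i j : Fin d, (Matrix.single i j (1:ℂ)).trace
        * ((fun X => T X) (Matrix.single i j (1:ℂ))).trace = if i = j then 1 else 0 := by
      intro i j
      rw [hTP, htrE]
      by_cases h : i = j <;> simp [h]
    simp only [this]
    simp [Finset.sum_ite_eq]
  -- sum of eigenvalues is d
  have sumlam : (∑ t : Fin R, ((lam t : ℝ) : ℂ)) = (d : ℂ) := by
    have h1 : C.trace = ∑ t : Fin R, ((lam t : ℝ) : ℂ) := by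
      rw [Matrix.trace]
      calc ∑ x, C.diag x = ∑ x, ∑ t, v t x * (starRingEnd ℂ) (v t x) :=
            Finset.sum_congr rfl fun x _ => F1 x x
        _ = ∑ t, ∑ x, v t x * (starRingEnd ℂ) (v t x) := Finset.sum_comm
        _ = ∑ t : Fin R, ((lam t : ℝ) : ℂ) := by
            refine Finset.sum_congr rfl fun t _ => ?_
            have := F2 t t
            rw [if_pos rfl] at this
            rw [← this]
            exact Finset.sum_congr rfl fun x _ => mul_comm _ _
    rw [← h1, hTrC]
  -- Kraus operators
  set K : Fin R → Matrix (Fin d) (Fin d) ℂ :=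
    fun t => Matrix.of (fun a i => v t (i, a)) with hKdef
  have hGram : ∀ s t : Fin R, ((K s)ᴴ * K t).trace = if s = t then ((lam s : ℝ) : ℂ) else 0 := by
    intro s t
    have h1 : ((K s)ᴴ * K t).trace = ∑ x : Fin d × Fin d, (starRingEnd ℂ) (v s x) * v t x := by
      rw [Matrix.trace, Fintype.sum_prod_type]
      simp only [Matrix.diag, Matrix.mul_apply, Matrix.conjTranspose_apply, hKdef,
        Matrix.of_apply, RCLike.star_def]
      try exact Finset.sum_comm
    rw [h1, F2]
  have hChoiEntry : ∀ (i j a b : Fin d), (T (Matrix.single i j (1:ℂ))) a b = C (i,a) (j,b) := by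
    intro i j a b
    rw [hCdef]
    unfold choi
    simp only [Matrix.sum_apply, Matrix.kroneckerMap_apply]
    rw [Finset.sum_eq_single i]
    · rw [Finset.sum_eq_single j]
      · rw [Matrix.single_apply_same, one_mul]
      · intro j' _ hj'
        exact mul_eq_zero_of_left (Matrix.single_apply_of_ne _ _ _ _ _ (by tauto)) _
      · intro h; exact absurd (Finset.mem_univ j) h
    · intro i' _ hi'
      apply Finset.sum_eq_zero
      intro j' _
      exact mul_eq_zero_of_left (Matrix.single_apply_of_ne _ _ _ _ _ (by tauto)) _
    · intro h; exact absurd (Finset.mem_univ i) h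
  have hKel : ∀ i j : Fin d, T (Matrix.single i j (1:ℂ))
      = ∑ t : Fin R, K t * Matrix.single i j (1:ℂ) * (K t)ᴴ := by
    intro i j
    ext a b
    have hrhs : ∀ t : Fin R, (K t * Matrix.single i j (1:ℂ) * (K t)ᴴ) a b
        = v t (i,a) * (starRingEnd ℂ) (v t (j,b)) := by
      intro t
      simp only [Matrix.mul_apply, Matrix.conjTranspose_apply, Matrix.single,
        Matrix.of_apply, hKdef, RCLike.star_def, ite_and, mul_ite, ite_mul, mul_zero, zero_mul,
        mul_one, one_mul, Finset.sum_ite_eq, Finset.sum_ite_eq', Finset.mem_univ, if_true]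
    rw [Matrix.sum_apply]
    rw [hChoiEntry, F1]
    exact Finset.sum_congr rfl fun t _ => (hrhs t).symm
  have hKraus : ∀ X : Matrix (Fin d) (Fin d) ℂ, T X = ∑ t : Fin R, K t * X * (K t)ᴴ := by
    intro X
    conv_lhs => rw [Matrix.matrix_eq_sum_single X]
    rw [map_sum]
    have hsm : ∀ i j : Fin d, Matrix.single i j (X i j)
        = X i j • Matrix.single i j (1:ℂ) := by
      intro i j
      rw [Matrix.smul_single, smul_eq_mul, mul_one]
    calc ∑ i, T (∑ j, Matrix.single i j (X i j))
        = ∑ i, ∑ j, (X i j) • T (Matrix.single i j (1:ℂ)) := by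
          refine Finset.sum_congr rfl fun i _ => ?_
          rw [map_sum]
          refine Finset.sum_congr rfl fun j _ => ?_
          rw [hsm, LinearMap.map_smul]
      _ = ∑ i, ∑ j, (X i j) • ∑ t : Fin R, K t * Matrix.single i j (1:ℂ) * (K t)ᴴ := by
          refine Finset.sum_congr rfl fun i _ => Finset.sum_congr rfl fun j _ => ?_
          rw [hKel]
      _ = ∑ t : Fin R, K t * X * (K t)ᴴ := by
          have hper : ∀ t : Fin R, K t * X * (K t)ᴴ
              = ∑ i, ∑ j, X i j • (K t * Matrix.single i j (1:ℂ) * (K t)ᴴ) := by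
            intro t
            conv_lhs => rw [Matrix.matrix_eq_sum_single X]
            simp only [Finset.mul_sum, Finset.sum_mul]
            refine Finset.sum_congr rfl fun i _ => Finset.sum_congr rfl fun j _ => ?_
            rw [hsm, Matrix.mul_smul, Matrix.smul_mul]
          simp only [hper, Finset.smul_sum]
          calc ∑ i, ∑ j, ∑ t : Fin R, X i j • (K t * Matrix.single i j (1:ℂ) * (K t)ᴴ)
              = ∑ i, ∑ t : Fin R, ∑ j, X i j • (K t * Matrix.single i j (1:ℂ) * (K t)ᴴ) :=
                Finset.sum_congr rfl fun i _ => Finset.sum_comm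
            _ = ∑ t : Fin R, ∑ i, ∑ j, X i j • (K t * Matrix.single i j (1:ℂ) * (K t)ᴴ) :=
                Finset.sum_comm
  -- flat Kraus operators
  set ζ : ℂ := Complex.exp (2 * Real.pi * Complex.I / R) with hζdef
  set A : Fin R → Matrix (Fin d) (Fin d) ℂ :=
    fun t => ∑ s : Fin R, (ζ ^ ((t : ℕ) * (s : ℕ))) • K s with hAdef
  have hζne : ζ ≠ 0 := Complex.exp_ne_zero _
  have hζunit : ∀ n : ℕ, (starRingEnd ℂ) (ζ ^ n) * ζ ^ n = 1 := by
    intro n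
    have hconj : (starRingEnd ℂ) ζ = ζ⁻¹ := by
      rw [hζdef, ← Complex.exp_conj, ← Complex.exp_neg]
      congr 1
      simp [map_div₀, Complex.conj_I, map_ofNat]
      ring
    rw [map_pow, hconj, inv_pow, inv_mul_cancel₀ (pow_ne_zero n hζne)]
  refine ⟨A, ?_, ?_⟩
  · intro t
    have expand : ((A t)ᴴ * A t).trace
        = ∑ s : Fin R, ∑ s' : Fin R, ((starRingEnd ℂ) (ζ ^ ((t:ℕ)*(s:ℕ))) * ζ ^ ((t:ℕ)*(s':ℕ)))
          * (((K s)ᴴ) * K s').trace := by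
      rw [hAdef]
      rw [Matrix.conjTranspose_sum]
      simp only [Matrix.conjTranspose_smul]
      rw [Finset.sum_mul, Matrix.trace_sum]
      refine Finset.sum_congr rfl fun s _ => ?_
      rw [Finset.mul_sum, Matrix.trace_sum]
      refine Finset.sum_congr rfl fun s' _ => ?_
      rw [Matrix.smul_mul, Matrix.mul_smul, smul_smul, Matrix.trace_smul]
      simp [RCLike.star_def, smul_eq_mul]
    rw [expand]
    simp only [hGram, mul_ite, mul_zero, Finset.sum_ite_eq, Finset.sum_ite_eq',
      Finset.mem_univ, if_true]
    calc ∑ s : Fin R, (starRingEnd ℂ) (ζ ^ ((t:ℕ)*(s:ℕ))) * ζ ^ ((t:ℕ)*(s:ℕ)) * ((lam s : ℝ):ℂ)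
        = ∑ s : Fin R, ((lam s : ℝ):ℂ) := by
          refine Finset.sum_congr rfl fun s _ => ?_
          rw [hζunit]
          ring
      _ = (d:ℂ) := sumlam
  · intro X
    have step1 : ∀ t : Fin R, A t * X * (A t)ᴴ
        = ∑ s : Fin R, ∑ s' : Fin R, (ζ ^ ((t:ℕ)*(s:ℕ)) * (starRingEnd ℂ) (ζ ^ ((t:ℕ)*(s':ℕ))))
          • (K s * X * (K s')ᴴ) := by
      intro t
      rw [hAdef]
      rw [Matrix.conjTranspose_sum]
      simp only [Matrix.conjTranspose_smul]
      rw [Finset.sum_mul, Finset.sum_mul]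
      refine Finset.sum_congr rfl fun s _ => ?_
      rw [Finset.mul_sum]
      refine Finset.sum_congr rfl fun s' _ => ?_
      rw [Matrix.smul_mul, Matrix.smul_mul, Matrix.mul_smul, smul_smul]
      simp [RCLike.star_def, smul_eq_mul]
    have expand : (∑ t : Fin R, A t * X * (A t)ᴴ)
        = ∑ s : Fin R, ∑ s' : Fin R, (∑ t : Fin R, ζ ^ ((t:ℕ)*(s:ℕ)) * (starRingEnd ℂ) (ζ ^ ((t:ℕ)*(s':ℕ))))
          • (K s * X * (K s')ᴴ) := by
      simp only [step1]
      rw [Finset.sum_comm]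
      refine Finset.sum_congr rfl fun s _ => ?_
      rw [Finset.sum_comm]
      refine Finset.sum_congr rfl fun s' _ => ?_
      rw [Finset.sum_smul]
    rw [expand]
    have hdft : ∀ s s' : Fin R, (∑ t : Fin R, ζ ^ ((t:ℕ)*(s:ℕ)) * (starRingEnd ℂ) (ζ ^ ((t:ℕ)*(s':ℕ))))
        = if s = s' then (R : ℂ) else 0 := by
      intro s s'
      rw [hζdef]
      exact dft_sum R s s'
    simp only [hdft, ite_smul, zero_smul, Finset.sum_ite_eq, Finset.sum_ite_eq',
      Finset.mem_univ, if_true]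
    rw [hKraus X, ← Finset.smul_sum, smul_smul]
    by_cases hR0 : R = 0
    · haveI : IsEmpty (Fin R) := by rw [hR0]; infer_instance
      simp
    · rw [inv_mul_cancel₀ (by exact_mod_cast hR0 : (R:ℂ) ≠ 0), one_smul]
end
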